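/- arXiv:2102.08348 — 8 statements merged into one kernel-verified Lean document; each statement's English description precedes it below -/
import Mathlib

section
/- Quadratic solution to Puzzle 2: for every sufficiently large prime power n, there exists a partial boolean function f : {0,1}^{2n²} → {0,1,*} and an input z with f(z) = * such that C₁(f) ≤ n + 1, C₀(f) ≤ 200·n·log₂ n, and both C_{0̄}(f, z) ≥ n²/100 and C_{1̄}(f, z) ≥ n²/100. -/
/-- A partial input `ρ : ι → Option Bool` (`none` = `*`) is consistent with a total
input `x` if they agree on every non-`*` coordinate of `ρ`. -/
def Consistent {ι : Type} (ρ : ι → Option Bool) (x : ι → Bool) : Prop :=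
  ∀ (i : ι) (b : Bool), ρ i = some b → x i = b

/-- The size of a partial input: its number of non-`*` coordinates. -/
def psize {ι : Type} [Fintype ι] (ρ : ι → Option Bool) : ℕ :=
  (Finset.univ.filter fun i => (ρ i).isSome).card

/-- `ρ` is an `S`-certificate for `x` w.r.t. the partial function `f`
(`none` plays the role of `*`): `ρ` is consistent with `x` and every `x'`
consistent with `ρ` has `f x' ∈ S`. -/
def IsCert {ι : Type} (f : (ι → Bool) → Option Bool) (S : Set (Option Bool))
    (ρ : ι → Option Bool) (x : ι → Bool) : Prop :=
  Consistent ρ x ∧ ∀ x' : ι → Bool, Consistent ρ x' → f x' ∈ S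

/-- `C_S(f, x)`: the least size of an `S`-certificate for `x`. -/
noncomputable def Cx {ι : Type} [Fintype ι] (f : (ι → Bool) → Option Bool)
    (S : Set (Option Bool)) (x : ι → Bool) : ℕ :=
  sInf {k | ∃ ρ, IsCert f S ρ x ∧ psize ρ ≤ k}

/-- `C_S(f)`: the least `k` such that every `x` with `f x ∈ S` has an
`S`-certificate of size at most `k`. -/
noncomputable def CC {ι : Type} [Fintype ι] (f : (ι → Bool) → Option Bool)
    (S : Set (Option Bool)) : ℕ :=
  sInf {k | ∀ x, f x ∈ S → ∃ ρ, IsCert f S ρ x ∧ psize ρ ≤ k}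

/-- `C(f) = max{C₀(f), C₁(f)}` for a partial function `f`. -/
noncomputable def Cmax {ι : Type} [Fintype ι] (f : (ι → Bool) → Option Bool) : ℕ :=
  max (CC f {some false}) (CC f {some true})

/-- View a total boolean function as a partial one. -/
def totalize {ι : Type} (f : (ι → Bool) → Bool) : (ι → Bool) → Option Bool :=
  fun x => some (f x)

/-- `C₀(f)` for a total function `f`. -/
noncomputable def C0 {ι : Type} [Fintype ι] (f : (ι → Bool) → Bool) : ℕ :=
  CC (totalize f) {some false}

/-- `C₁(f)` for a total function `f`. -/
noncomputable def C1 {ι : Type} [Fintype ι] (f : (ι → Bool) → Bool) : ℕ :=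
  CC (totalize f) {some true}

/-- `C(f) = max{C₀(f), C₁(f)}` for a total function `f`. -/
noncomputable def Ctot {ι : Type} [Fintype ι] (f : (ι → Bool) → Bool) : ℕ :=
  max (C0 f) (C1 f)

/-- Unambiguous 1-certificate complexity: the least `k` such that there is a set `U`
of `{1}`-certificates, each of size at most `k`, with every 1-input of `f`
consistent with exactly one member of `U`. -/
noncomputable def UC1 {ι : Type} [Fintype ι] (f : (ι → Bool) → Bool) : ℕ :=
  sInf {k | ∃ U : Set (ι → Option Bool),
    (∀ ρ ∈ U, psize ρ ≤ k ∧ ∀ x, Consistent ρ x → f x = true) ∧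
    ∀ x, f x = true → ∃! ρ, ρ ∈ U ∧ Consistent ρ x}

namespace QP2

open Finset

attribute [local instance 0] Classical.propDecidable

variable {F : Type} [Field F] [Fintype F] [DecidableEq F]

/-- The graph of the affine map `r ↦ p.1 + p.2 * r`, as a set of cells. -/
def line (p : F × F) : Finset (F × F) :=
  Finset.univ.filter fun q => q.2 = p.1 + p.2 * q.1

lemma mem_line {p q : F × F} : q ∈ line p ↔ q.2 = p.1 + p.2 * q.1 := by
  simp [line]

lemma line_eq_image (p : F × F) :
    line p = (Finset.univ : Finset F).image fun r => (r, p.1 + p.2 * r) := by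
  ext q
  simp only [mem_line, Finset.mem_image, Finset.mem_univ, true_and]
  constructor
  · intro h
    exact ⟨q.1, by rw [← h]⟩
  · rintro ⟨r, rfl⟩
    rfl

lemma card_line (p : F × F) : (line p).card = Fintype.card F := by
  rw [line_eq_image, Finset.card_image_of_injective, Finset.card_univ]
  intro a b h
  exact congrArg Prod.fst h

lemma card_line_inter {p p' : F × F} (h : p ≠ p') :
    ((line p) ∩ (line p')).card ≤ 1 := by
  refine Finset.card_le_one.2 ?_
  rintro ⟨r, y⟩ hq ⟨r', y'⟩ hq'
  simp only [Finset.mem_inter, mem_line] at hq hq'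
  by_cases hb : p.2 = p'.2
  · exfalso
    apply h
    have h1 : p.1 = p'.1 := by
      have := hq.1.symm.trans hq.2
      rw [hb] at this
      linear_combination this
    exact Prod.ext h1 hb
  · have hb' : p.2 - p'.2 ≠ 0 := sub_ne_zero.2 hb
    have h1 : (p.2 - p'.2) * r = p'.1 - p.1 := by linear_combination hq.2 - hq.1
    have h2 : (p.2 - p'.2) * r' = p'.1 - p.1 := by linear_combination hq'.2 - hq'.1
    have hr : r = r' := mul_left_cancel₀ hb' (h1.trans h2.symm)
    have hy : y = y' := by rw [hq.1, hq'.1, hr]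
    rw [hr, hy]

/-- Union bound: pairwise almost-disjoint big sets have a big union. -/
lemma union_bound {I α : Type} [DecidableEq α] (A : I → Finset α) (c : ℕ) (T : Finset I) :
    (∀ i ∈ T, ∀ j ∈ T, i ≠ j → ((A i) ∩ (A j)).card ≤ 1) →
    (∀ i ∈ T, c ≤ (A i).card) →
    T.card * c ≤ (T.biUnion A).card + T.card ^ 2 := by
  induction T using Finset.induction_on with
  | empty => simp
  | @insert a s ha ih =>
    intro hpair hc
    have hbu : (insert a s).biUnion A = A a ∪ s.biUnion A := Finset.biUnion_insert
    have hint : (A a ∩ s.biUnion A).card ≤ s.card := by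
      have hsub : A a ∩ s.biUnion A ⊆ s.biUnion fun i => A a ∩ A i := by
        intro x hx
        simp only [Finset.mem_inter, Finset.mem_biUnion] at hx ⊢
        obtain ⟨hxa, i, hi, hxi⟩ := hx
        exact ⟨i, hi, hxa, hxi⟩
      calc (A a ∩ s.biUnion A).card ≤ (s.biUnion fun i => A a ∩ A i).card :=
            Finset.card_le_card hsub
        _ ≤ ∑ i ∈ s, ((A a) ∩ (A i)).card := Finset.card_biUnion_le
        _ ≤ ∑ _i ∈ s, 1 := by
            refine Finset.sum_le_sum fun i hi => ?_
            exact hpair a (Finset.mem_insert_self a s) i (Finset.mem_insert_of_mem hi)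
              (fun hne => ha (hne ▸ hi))
        _ = s.card := by simp
    have hca : c ≤ (A a).card := hc a (Finset.mem_insert_self a s)
    have h1 : (A a ∩ s.biUnion A).card + (A a \ s.biUnion A).card = (A a).card :=
      Finset.card_inter_add_card_sdiff _ _
    have h2 : (A a \ s.biUnion A).card + (s.biUnion A).card = ((insert a s).biUnion A).card := by
      rw [hbu]
      exact Finset.card_sdiff_add_card _ _
    have ihq : s.card * c ≤ (s.biUnion A).card + s.card ^ 2 := by
      refine ih (fun i hi j hj hij => hpair i (Finset.mem_insert_of_mem hi) j
        (Finset.mem_insert_of_mem hj) hij) (fun i hi => hc i (Finset.mem_insert_of_mem hi))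
    have hcardi : (insert a s).card = s.card + 1 := Finset.card_insert_of_notMem ha
    rw [hcardi]
    nlinarith [hint, hca, h1, h2, ihq]

variable (n : ℕ)

lemma bad_small (hn : 10000 ≤ n)
    (S : Finset (F × F)) (hS : 100 * S.card < n ^ 2) :
    ((Finset.univ : Finset (F × F)).filter fun p => n < 2 * ((line p ∩ S).card)).card ≤ n := by
  by_contra hbig
  push_neg at hbig
  obtain ⟨T, hTsub, hTcard⟩ := Finset.exists_subset_card_eq
    (show n / 25 + 1 ≤ ((Finset.univ : Finset (F × F)).filter
      fun p => n < 2 * ((line p ∩ S).card)).card by omega)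
  have hpair : ∀ i ∈ T, ∀ j ∈ T, i ≠ j → (((line i ∩ S)) ∩ ((line j ∩ S))).card ≤ 1 := by
    intro i _ j _ hij
    refine le_trans (Finset.card_le_card ?_) (card_line_inter hij)
    intro x hx
    simp only [Finset.mem_inter] at hx ⊢
    exact ⟨hx.1.1, hx.2.1⟩
  have hc : ∀ i ∈ T, n / 2 + 1 ≤ (line i ∩ S).card := by
    intro i hi
    have := (Finset.mem_filter.1 (hTsub hi)).2
    omega
  have hub := union_bound (fun p => line p ∩ S) (n / 2 + 1) T hpair hc
  have hle : (T.biUnion fun p => line p ∩ S).card ≤ S.card := by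
    refine Finset.card_le_card ?_
    intro x hx
    simp only [Finset.mem_biUnion, Finset.mem_inter] at hx
    obtain ⟨i, _, _, hxS⟩ := hx
    exact hxS
  rw [hTcard] at hub
  have hSle : (T.biUnion fun p => line p ∩ S).card ≤ S.card := hle
  -- arithmetic contradiction over the reals
  have ha1 : 25 * (n / 25) ≤ n := Nat.mul_div_le n 25
  have ha2 : n < 25 * (n / 25) + 25 := by omega
  have hb1 : 2 * (n / 2) ≤ n := Nat.mul_div_le n 2
  have hb2 : n < 2 * (n / 2) + 2 := by omega
  have hub2 : (n / 25 + 1) * (n / 2 + 1) ≤ S.card + (n / 25 + 1) ^ 2 :=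
    hub.trans (by exact Nat.add_le_add_right hSle _)
  set a := n / 25 with hadef
  set b := n / 2 with hbdef
  have hra : (25 : ℝ) * a ≤ n := by exact_mod_cast ha1
  have hra2 : (n : ℝ) < 25 * a + 25 := by exact_mod_cast ha2
  have hrb : (2 : ℝ) * b ≤ n := by exact_mod_cast hb1
  have hrb2 : (n : ℝ) < 2 * b + 2 := by exact_mod_cast hb2
  have hrub : ((a : ℝ) + 1) * (b + 1) ≤ S.card + (a + 1) ^ 2 := by exact_mod_cast hub2
  have hrS : 100 * (S.card : ℝ) < n ^ 2 := by exact_mod_cast hS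
  have hrn : (10000 : ℝ) ≤ n := by exact_mod_cast hn
  nlinarith [hra, hra2, hrb, hrb2, hrub, hrS, hrn, sq_nonneg ((n : ℝ) - 25 * a),
    sq_nonneg ((n : ℝ) - 2 * b)]


lemma greedy (hcard : Fintype.card F = n) (hn : 2 ≤ n) (S : Finset (F × F)) :
    ∀ (k : ℕ) (P : Finset (F × F)), (∀ p ∈ P, n ≤ 2 * ((line p \ S).card)) →
      ((P.card : ℝ) < (2 * n / (2 * n - 1)) ^ k) →
      ∃ B : Finset (F × F), B.card ≤ k ∧ (∀ q ∈ B, q ∉ S) ∧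
        ∀ p ∈ P, ∃ q ∈ line p \ S, q ∈ B := by
  have hnR : (2 : ℝ) ≤ (n : ℝ) := by exact_mod_cast hn
  intro k
  induction k with
  | zero =>
    intro P _ hlt
    rw [pow_zero] at hlt
    have : P.card = 0 := by exact_mod_cast Nat.lt_one_iff.1 (by exact_mod_cast hlt)
    rw [Finset.card_eq_zero] at this
    subst this
    exact ⟨∅, le_rfl, by simp, by simp⟩
  | succ k ih =>
    intro P hgood hlt
    rcases P.eq_empty_or_nonempty with rfl | hP
    · exact ⟨∅, by simp, by simp, by simp⟩
    have hR1 : 1 ≤ P.card := Finset.card_pos.2 hP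
    set cov : F × F → ℕ := fun q => (P.filter fun p => q ∈ line p \ S).card with hcov
    -- double counting
    have hdc : ∑ q : F × F, cov q = ∑ p ∈ P, ((line p) \ S).card := by
      calc ∑ q : F × F, cov q
          = ∑ q : F × F, ∑ p ∈ P, (if q ∈ line p \ S then 1 else 0) := by
            refine Finset.sum_congr rfl fun q _ => ?_
            exact Finset.card_filter _ _
        _ = ∑ p ∈ P, ∑ q : F × F, (if q ∈ line p \ S then 1 else 0) := Finset.sum_comm
        _ = ∑ p ∈ P, ((line p) \ S).card := by
            refine Finset.sum_congr rfl fun p _ => ?_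
            rw [← Finset.card_filter]
            congr 1
            exact Finset.filter_univ_mem _
    have hsum : P.card * n ≤ 2 * ∑ q : F × F, cov q := by
      rw [hdc, Finset.mul_sum]
      calc P.card * n = ∑ _p ∈ P, n := by rw [Finset.sum_const, smul_eq_mul, mul_comm]
        _ ≤ ∑ p ∈ P, 2 * ((line p) \ S).card := Finset.sum_le_sum hgood
    -- exists a cell covering many
    have hex : ∃ q : F × F, P.card ≤ 2 * n * cov q := by
      by_contra hno
      push_neg at hno
      have h1 : ∀ q : F × F, 2 * n * cov q + 1 ≤ P.card := fun q => hno q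
      have h2 : ∑ q : F × F, (2 * n * cov q + 1) ≤ ∑ _q : F × F, P.card :=
        Finset.sum_le_sum fun q _ => h1 q
      rw [Finset.sum_add_distrib, Finset.sum_const, Finset.sum_const] at h2
      simp only [smul_eq_mul, mul_one] at h2
      rw [← Finset.mul_sum] at h2
      have hcard2 : Fintype.card (F × F) = n ^ 2 := by
        rw [Fintype.card_prod, hcard]; ring
      have huniv : (Finset.univ : Finset (F × F)).card = n ^ 2 := by
        rw [Finset.card_univ, hcard2]
      rw [huniv] at h2
      -- 2n * Σ cov ≥ n * (P.card * n) = P.card * n^2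
      have h3 : P.card * n ^ 2 ≤ 2 * n * ∑ q : F × F, cov q := by
        calc P.card * n ^ 2 = n * (P.card * n) := by ring
          _ ≤ n * (2 * ∑ q : F × F, cov q) := Nat.mul_le_mul_left n hsum
          _ = 2 * n * ∑ q : F × F, cov q := by ring
      have hn2 : 1 ≤ n ^ 2 := by nlinarith
      nlinarith [h2, h3, hn2]
    obtain ⟨q, hq⟩ := hex
    have hcov1 : 1 ≤ cov q := by
      rcases Nat.eq_zero_or_pos (cov q) with h0 | h1
      · rw [h0] at hq; omega
      · exact h1
    have hqS : q ∉ S := by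
      obtain ⟨p0, hp0⟩ := Finset.card_pos.1 hcov1
      have := (Finset.mem_filter.1 hp0).2
      exact (Finset.mem_sdiff.1 this).2
    set P' := P.filter (fun p => ¬ q ∈ line p \ S) with hP'def
    have hsplit : (P.filter fun p => q ∈ line p \ S).card + P'.card = P.card :=
      by rw [Finset.card_filter_add_card_filter_not]
    have hlt' : ((P'.card : ℝ)) < (2 * n / (2 * n - 1)) ^ k := by
      have hden : (0 : ℝ) < 2 * (n : ℝ) - 1 := by linarith
      have hfrac1 : (1 : ℝ) < 2 * n / (2 * n - 1) := by
        rw [lt_div_iff₀ hden]; linarith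
      have hpow : (0 : ℝ) < (2 * n / (2 * n - 1)) ^ k := by positivity
      have hcovR : (P.card : ℝ) ≤ 2 * n * cov q := by exact_mod_cast hq
      have hc : cov q + P'.card = P.card := hsplit
      have hP'R : (P'.card : ℝ) = (P.card : ℝ) - cov q := by
        have h' : ((cov q : ℝ)) + P'.card = P.card := by exact_mod_cast hc
        linarith
      -- P'.card ≤ P.card * (2n-1)/(2n) < ((2n/(2n-1))^(k+1)) * (2n-1)/(2n) = (...)^k
      have hstep : (P'.card : ℝ) ≤ (P.card : ℝ) * ((2 * n - 1) / (2 * n)) := by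
        rw [hP'R]
        have h2npos : (0 : ℝ) < 2 * n := by linarith
        have hdiv : (P.card : ℝ) / (2 * n) ≤ cov q := by
          rw [div_le_iff₀ h2npos]
          nlinarith [hcovR]
        have hexp : (P.card : ℝ) * ((2 * n - 1) / (2 * n))
            = (P.card : ℝ) - (P.card : ℝ) / (2 * n) := by
          field_simp
        rw [hexp]
        linarith [hdiv]
      calc (P'.card : ℝ) ≤ (P.card : ℝ) * ((2 * n - 1) / (2 * n)) := hstep
        _ < (2 * n / (2 * n - 1)) ^ (k + 1) * ((2 * n - 1) / (2 * n)) := by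
            have hfac : (0:ℝ) < (2 * n - 1) / (2 * n) := by positivity
            exact mul_lt_mul_of_pos_right hlt hfac
        _ = (2 * n / (2 * n - 1)) ^ k := by
            rw [pow_succ]
            field_simp
    obtain ⟨B', hB'card, hB'S, hB'cov⟩ := ih P'
      (fun p hp => hgood p (Finset.filter_subset _ _ hp)) hlt'
    refine ⟨insert q B', ?_, ?_, ?_⟩
    · exact (Finset.card_insert_le _ _).trans (by omega)
    · intro q' hq'
      rcases Finset.mem_insert.1 hq' with rfl | hq'
      · exact hqS
      · exact hB'S q' hq'
    · intro p hp
      by_cases hcase : q ∈ line p \ S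
      · exact ⟨q, hcase, Finset.mem_insert_self _ _⟩
      · have hp' : p ∈ P' := Finset.mem_filter.2 ⟨hp, hcase⟩
        obtain ⟨q', hq'1, hq'2⟩ := hB'cov p hp'
        exact ⟨q', hq'1, Finset.mem_insert_of_mem hq'2⟩


lemma main_cover (hcard : Fintype.card F = n) (hn : 10000 ≤ n)
    (S : Finset (F × F)) (hS : 100 * S.card < n ^ 2) :
    ∃ BP BM : Finset (F × F), (∀ q ∈ BP, q ∉ S) ∧ BP.Nonempty ∧
      BP.card ≤ 2 * n * (2 * (Nat.log 2 n + 1)) + 1 ∧ BM.card ≤ n ∧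
      ∀ p : F × F, p ∈ BM ∨ ∃ q ∈ BP, q ∈ line p := by
  have hn2 : 2 ≤ n := by omega
  have hnR : (2:ℝ) ≤ (n:ℝ) := by exact_mod_cast hn2
  set L := Nat.log 2 n with hL
  set K1 := 2 * n * (2 * (L + 1)) with hK1
  set Good := (Finset.univ : Finset (F × F)).filter
    (fun p => ¬ (n < 2 * ((line p ∩ S).card))) with hGoodDef
  have hgood : ∀ p ∈ Good, n ≤ 2 * ((line p \ S).card) := by
    intro p hp
    have h1 := (Finset.mem_filter.1 hp).2
    have h2 : (line p ∩ S).card + (line p \ S).card = (line p).card :=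
      Finset.card_inter_add_card_sdiff _ _
    have h3 : (line p).card = n := by rw [card_line, hcard]
    omega
  have hden : (0:ℝ) < 2*(n:ℝ) - 1 := by linarith
  have hbase : (2:ℝ) ≤ (2*(n:ℝ)/(2*(n:ℝ)-1)) ^ (2*n) := by
    have hfrach : (2*(n:ℝ)/(2*(n:ℝ)-1)) = 1 + 1/(2*(n:ℝ)-1) := by field_simp; ring
    rw [hfrach]
    have h2 := one_add_mul_le_pow (a := 1/(2*(n:ℝ)-1)) ((by positivity : (0:ℝ) ≤ 1/(2*(n:ℝ)-1)).trans' (by norm_num)) (2*n)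
    have h3 : (1:ℝ) ≤ (2*n : ℕ) * (1/(2*(n:ℝ)-1)) := by
      push_cast
      rw [mul_one_div, le_div_iff₀ hden]
      linarith
    calc (2:ℝ) ≤ 1 + (2*n:ℕ) * (1/(2*(n:ℝ)-1)) := by linarith
      _ ≤ _ := h2
  have hpowK1 : ((n:ℝ))^2 < (2*(n:ℝ)/(2*(n:ℝ)-1)) ^ K1 := by
    have e1 : (2*(n:ℝ)/(2*(n:ℝ)-1)) ^ K1 = ((2*(n:ℝ)/(2*(n:ℝ)-1)) ^ (2*n)) ^ (2*(L+1)) := by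
      rw [← pow_mul]
    have e2 : ((2:ℝ)) ^ (2*(L+1)) ≤ ((2*(n:ℝ)/(2*(n:ℝ)-1)) ^ (2*n)) ^ (2*(L+1)) :=
      pow_le_pow_left₀ (by norm_num) hbase _
    have e3 : ((n:ℝ))^2 < (2:ℝ) ^ (2*(L+1)) := by
      have h4 : n < 2 ^ (L+1) := Nat.lt_pow_succ_log_self (by norm_num) n
      have h5 : (n:ℝ) < 2 ^ (L+1) := by exact_mod_cast h4
      have h6 : ((n:ℝ))^2 < ((2:ℝ)^(L+1))^2 := by
        apply pow_lt_pow_left₀ h5 (by positivity)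
        norm_num
      calc ((n:ℝ))^2 < ((2:ℝ)^(L+1))^2 := h6
        _ = (2:ℝ) ^ (2*(L+1)) := by rw [← pow_mul, mul_comm]
    calc ((n:ℝ))^2 < (2:ℝ) ^ (2*(L+1)) := e3
      _ ≤ ((2*(n:ℝ)/(2*(n:ℝ)-1)) ^ (2*n)) ^ (2*(L+1)) := e2
      _ = _ := e1.symm
  have hGcard : ((Good.card : ℝ)) < (2*(n:ℝ)/(2*(n:ℝ)-1)) ^ K1 := by
    have h1 : Good.card ≤ n^2 := by
      have := Finset.card_le_univ Good
      rwa [Fintype.card_prod, hcard, ← sq] at this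
    calc ((Good.card:ℝ)) ≤ ((n:ℝ))^2 := by exact_mod_cast h1
      _ < _ := hpowK1
  obtain ⟨B, hBcard, hBS, hBcov⟩ := greedy n hcard hn2 S K1 Good hgood hGcard
  have hq0 : ∃ q0 : F × F, q0 ∉ S := by
    by_contra hall
    push_neg at hall
    have : (Finset.univ : Finset (F × F)) ⊆ S := fun x _ => hall x
    have h2 := Finset.card_le_card this
    rw [Finset.card_univ, Fintype.card_prod, hcard, ← sq] at h2
    nlinarith [hS, h2]
  obtain ⟨q0, hq0S⟩ := hq0
  refine ⟨insert q0 B, (Finset.univ : Finset (F × F)).filter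
    (fun p => n < 2 * ((line p ∩ S).card)), ?_, ?_, ?_, ?_, ?_⟩
  · intro q hq
    rcases Finset.mem_insert.1 hq with rfl | hq
    · exact hq0S
    · exact hBS q hq
  · exact Finset.insert_nonempty _ _
  · exact (Finset.card_insert_le _ _).trans (by omega)
  · exact bad_small n hn S hS
  · intro p
    by_cases hbad : n < 2 * ((line p ∩ S).card)
    · exact Or.inl (Finset.mem_filter.2 ⟨Finset.mem_univ p, hbad⟩)
    · right
      obtain ⟨q, hq1, hq2⟩ := hBcov p (Finset.mem_filter.2 ⟨Finset.mem_univ p, hbad⟩)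
      exact ⟨q, Finset.mem_insert_of_mem hq2, (Finset.mem_sdiff.1 hq1).1⟩

/-! ### The partial function -/

/-- Total size budget for a 0-certificate. -/
def Kb (n : ℕ) : ℕ := 2 * n * (2 * (Nat.log 2 n + 1)) + 1 + n

section Master

variable {ι : Type} [Fintype ι]

/-- Reading a `P`-grid bit. -/
def Xc (e : ι ≃ ((F × F) ⊕ (F × F))) (x : ι → Bool) (p : F × F) : Bool :=
  x (e.symm (Sum.inl p))

/-- Reading a `Q`-grid bit. -/
def Yc (e : ι ≃ ((F × F) ⊕ (F × F))) (x : ι → Bool) (q : F × F) : Bool :=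
  x (e.symm (Sum.inr q))

/-- 1-cube: `P`-bit `p` is on, the whole line of `p` in the `Q`-grid is off. -/
def OneAt (e : ι ≃ ((F × F) ⊕ (F × F))) (p : F × F) (x : ι → Bool) : Prop :=
  Xc e x p = true ∧ ∀ q ∈ line p, Yc e x q = false

/-- Admissible 0-cubes. -/
def IsV (n : ℕ) (BP BM : Finset (F × F)) : Prop :=
  BP.Nonempty ∧ BP.card + BM.card ≤ Kb n ∧ ∀ p : F × F, p ∈ BM ∨ ∃ q ∈ BP, q ∈ line p

def ZeroAt (e : ι ≃ ((F × F) ⊕ (F × F))) (BP BM : Finset (F × F)) (x : ι → Bool) : Prop :=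
  (∀ q ∈ BP, Yc e x q = true) ∧ ∀ p ∈ BM, Xc e x p = false

/-- The partial function. -/
noncomputable def ff (e : ι ≃ ((F × F) ⊕ (F × F))) (n : ℕ) : (ι → Bool) → Option Bool :=
  fun x =>
    if ∃ p, OneAt e p x then some true
    else if ∃ BP BM, IsV (F := F) n BP BM ∧ ZeroAt e BP BM x then some false
    else none

/-- The 1-certificates. -/
def rho1 (e : ι ≃ ((F × F) ⊕ (F × F))) (p : F × F) : ι → Option Bool := fun i =>
  Sum.elim (fun p' => if p' = p then some true else none)
    (fun q => if q ∈ line p then some false else none) (e i)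

/-- The 0-certificates. -/
def rho0 (e : ι ≃ ((F × F) ⊕ (F × F))) (BP BM : Finset (F × F)) : ι → Option Bool := fun i =>
  Sum.elim (fun p' => if p' ∈ BM then some false else none)
    (fun q => if q ∈ BP then some true else none) (e i)

lemma psize_elim (e : ι ≃ ((F × F) ⊕ (F × F))) (g1 g2 : F × F → Option Bool) :
    psize (fun i => Sum.elim g1 g2 (e i)) =
      ((Finset.univ : Finset (F × F)).filter fun p => (g1 p).isSome).card +
      ((Finset.univ : Finset (F × F)).filter fun q => (g2 q).isSome).card := by
  calc psize (fun i => Sum.elim g1 g2 (e i))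
      = ∑ i : ι, (if (Sum.elim g1 g2 (e i)).isSome = true then 1 else 0) :=
        Finset.card_filter _ _
    _ = ∑ s : (F × F) ⊕ (F × F), (if (Sum.elim g1 g2 s).isSome = true then 1 else 0) :=
        Fintype.sum_equiv e _ _ (fun i => rfl)
    _ = (∑ p : F × F, (if (g1 p).isSome = true then 1 else 0))
        + (∑ q : F × F, (if (g2 q).isSome = true then 1 else 0)) := by
        rw [Fintype.sum_sum_type]
        rfl
    _ = _ := by rw [← Finset.card_filter, ← Finset.card_filter]

lemma psize_rho1 (hcard : Fintype.card F = n) (e : ι ≃ ((F × F) ⊕ (F × F))) (p : F × F) :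
    psize (rho1 e p) = 1 + n := by
  unfold rho1
  rw [psize_elim]
  congr 1
  · have h : ((Finset.univ : Finset (F × F)).filter
        fun p' => ((if p' = p then some true else (none : Option Bool)).isSome)) = {p} := by
      ext p'
      by_cases h : p' = p <;> simp [h]
    rw [h, Finset.card_singleton]
  · have h : ((Finset.univ : Finset (F × F)).filter
        fun q => ((if q ∈ line p then some false else (none : Option Bool)).isSome)) = line p := by
      ext q
      by_cases h : q ∈ line p <;> simp [h]
    rw [h, card_line, hcard]

lemma psize_rho0 (e : ι ≃ ((F × F) ⊕ (F × F))) (BP BM : Finset (F × F)) :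
    psize (rho0 e BP BM) = BM.card + BP.card := by
  unfold rho0
  rw [psize_elim]
  congr 1
  · have h : ((Finset.univ : Finset (F × F)).filter
        fun p' => ((if p' ∈ BM then some false else (none : Option Bool)).isSome)) = BM := by
      ext p'
      by_cases h : p' ∈ BM <;> simp [h]
    rw [h]
  · have h : ((Finset.univ : Finset (F × F)).filter
        fun q => ((if q ∈ BP then some true else (none : Option Bool)).isSome)) = BP := by
      ext q
      by_cases h : q ∈ BP <;> simp [h]
    rw [h]

theorem master (hcard : Fintype.card F = n) (hn : 10000 ≤ n)
    (e : ι ≃ ((F × F) ⊕ (F × F))) :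
    ∃ f : (ι → Bool) → Option Bool, ∃ z : ι → Bool,
      f z = none ∧
      CC f {some true} ≤ n + 1 ∧
      CC f {some false} ≤ Kb n ∧
      n ^ 2 ≤ 100 * Cx f {some true, none} z ∧
      n ^ 2 ≤ 100 * Cx f {some false, none} z := by
  set f := ff e n with hfdef
  set z : ι → Bool := fun _ => false with hzdef
  have hfz : f z = none := by
    rw [hfdef]
    unfold ff
    rw [if_neg, if_neg]
    · rintro ⟨BP, BM, ⟨⟨q0, hq0⟩, -, -⟩, hz1, -⟩
      have := hz1 q0 hq0
      simp [Yc, hzdef] at this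
    · rintro ⟨p, hp, -⟩
      simp [Xc, hzdef] at hp
  refine ⟨f, z, hfz, ?_, ?_, ?_, ?_⟩
  -- (2) C1 ≤ n + 1
  · apply Nat.sInf_le
    intro x hx
    rw [Set.mem_singleton_iff] at hx
    have h1 : ∃ p, OneAt e p x := by
      by_contra h1
      rw [hfdef] at hx
      unfold ff at hx
      rw [if_neg h1] at hx
      split_ifs at hx <;> simp_all
    obtain ⟨p, hp⟩ := h1
    refine ⟨rho1 e p, ⟨?_, ?_⟩, ?_⟩
    · -- consistency with x
      intro i b hb
      unfold rho1 at hb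
      rcases he : e i with p' | q
      · rw [he] at hb
        simp only [Sum.elim_inl] at hb
        by_cases hpp : p' = p
        · rw [if_pos hpp] at hb
          have hib : b = true := by simpa using hb.symm
          have hi : i = e.symm (Sum.inl p) := by
            rw [← hpp, ← he, Equiv.symm_apply_apply]
          rw [hib, hi]
          exact hp.1
        · rw [if_neg hpp] at hb
          exact absurd hb (by simp)
      · rw [he] at hb
        simp only [Sum.elim_inr] at hb
        by_cases hq : q ∈ line p
        · rw [if_pos hq] at hb
          have hib : b = false := by simpa using hb.symm
          have hi : i = e.symm (Sum.inr q) := by rw [← he, Equiv.symm_apply_apply]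
          rw [hib, hi]
          exact hp.2 q hq
        · rw [if_neg hq] at hb
          exact absurd hb (by simp)
    · -- every consistent input is a 1-input
      intro x' hx'
      have hone : OneAt e p x' := by
        constructor
        · apply hx' (e.symm (Sum.inl p)) true
          unfold rho1
          simp [Equiv.apply_symm_apply]
        · intro q hq
          apply hx' (e.symm (Sum.inr q)) false
          unfold rho1
          simp [Equiv.apply_symm_apply, hq]
      rw [Set.mem_singleton_iff, hfdef]
      unfold ff
      rw [if_pos ⟨p, hone⟩]
    · rw [psize_rho1 n hcard e p]
      omega
  -- (3) C0 ≤ Kb n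
  · apply Nat.sInf_le
    intro x hx
    rw [Set.mem_singleton_iff] at hx
    have h1 : ¬ ∃ p, OneAt e p x := by
      intro h1
      rw [hfdef] at hx
      unfold ff at hx
      rw [if_pos h1] at hx
      simp at hx
    have h2 : ∃ BP BM, IsV (F := F) n BP BM ∧ ZeroAt e BP BM x := by
      by_contra h2
      rw [hfdef] at hx
      unfold ff at hx
      rw [if_neg h1, if_neg h2] at hx
      simp at hx
    obtain ⟨BP, BM, hV, hZ⟩ := h2
    refine ⟨rho0 e BP BM, ⟨?_, ?_⟩, ?_⟩
    · intro i b hb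
      unfold rho0 at hb
      rcases he : e i with p' | q
      · rw [he] at hb
        simp only [Sum.elim_inl] at hb
        by_cases hpp : p' ∈ BM
        · rw [if_pos hpp] at hb
          have hib : b = false := by simpa using hb.symm
          have hi : i = e.symm (Sum.inl p') := by rw [← he, Equiv.symm_apply_apply]
          rw [hib, hi]
          exact hZ.2 p' hpp
        · rw [if_neg hpp] at hb
          exact absurd hb (by simp)
      · rw [he] at hb
        simp only [Sum.elim_inr] at hb
        by_cases hq : q ∈ BP
        · rw [if_pos hq] at hb
          have hib : b = true := by simpa using hb.symm
          have hi : i = e.symm (Sum.inr q) := by rw [← he, Equiv.symm_apply_apply]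
          rw [hib, hi]
          exact hZ.1 q hq
        · rw [if_neg hq] at hb
          exact absurd hb (by simp)
    · intro x' hx'
      have hzero : ZeroAt e BP BM x' := by
        constructor
        · intro q hq
          apply hx' (e.symm (Sum.inr q)) true
          unfold rho0
          simp [Equiv.apply_symm_apply, hq]
        · intro p hp
          apply hx' (e.symm (Sum.inl p)) false
          unfold rho0
          simp [Equiv.apply_symm_apply, hp]
      have hnone : ¬ ∃ p, OneAt e p x' := by
        rintro ⟨p, hone⟩
        rcases hV.2.2 p with hmem | ⟨q, hqBP, hqline⟩
        · have hXf : Xc e x' p = false := hzero.2 p hmem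
          rw [hone.1] at hXf
          simp at hXf
        · have hYt : Yc e x' q = true := hzero.1 q hqBP
          have hYf : Yc e x' q = false := hone.2 q hqline
          rw [hYt] at hYf
          simp at hYf
      rw [Set.mem_singleton_iff, hfdef]
      unfold ff
      rw [if_neg hnone, if_pos ⟨BP, BM, hV, hzero⟩]
    · rw [psize_rho0 e BP BM]
      have := hV.2.1
      omega
  -- (4) the {1,*} lower bound at z
  · have hne : ({k | ∃ ρ, IsCert f {some true, none} ρ z ∧ psize ρ ≤ k}).Nonempty := by
      refine ⟨psize (fun i => some (z i)), fun i => some (z i), ⟨?_, ?_⟩, le_rfl⟩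
      · intro i b hb
        exact (Option.some_inj.1 hb)
      · intro x' hx'
        have hxz : x' = z := funext fun i => hx' i (z i) rfl
        rw [hxz, hfz]
        exact Set.mem_insert_of_mem _ rfl
    obtain ⟨ρ, hcert, hle⟩ := Nat.sInf_mem hne
    suffices h : n ^ 2 ≤ 100 * psize ρ by
      have h2 : psize ρ ≤ Cx f {some true, none} z := hle
      calc n ^ 2 ≤ 100 * psize ρ := h
        _ ≤ 100 * Cx f {some true, none} z := by omega
    by_contra hlt
    push_neg at hlt
    set S : Finset (F × F) :=
      (Finset.univ : Finset (F × F)).filter (fun q => (ρ (e.symm (Sum.inr q))).isSome) with hSdef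
    have hScard : S.card ≤ psize ρ := by
      refine Finset.card_le_card_of_injOn (fun q => e.symm (Sum.inr q)) ?_ ?_
      · intro q hq
        exact Finset.mem_filter.2 ⟨Finset.mem_univ _, (Finset.mem_filter.1 hq).2⟩
      · intro a _ b _ hab
        have h2 := congrArg e hab
        simpa [Equiv.apply_symm_apply] using h2
    have hS : 100 * S.card < n ^ 2 := by omega
    obtain ⟨BP, BM, hBPS, hBPne, hBPcard, hBMcard, hcov⟩ := main_cover n hcard hn S hS
    set x' : ι → Bool := fun i =>
      Sum.elim (fun _ => false) (fun q => if q ∈ BP then true else false) (e i) with hx'def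
    have hYx' : ∀ q : F × F, Yc e x' q = (if q ∈ BP then true else false) := by
      intro q
      rw [hx'def]
      unfold Yc
      simp [Equiv.apply_symm_apply]
    have hXx' : ∀ p : F × F, Xc e x' p = false := by
      intro p
      rw [hx'def]
      unfold Xc
      simp [Equiv.apply_symm_apply]
    have hcons : Consistent ρ x' := by
      intro i b hb
      have hbf : b = false := by
        have h2 := hcert.1 i b hb
        simpa [hzdef] using h2.symm
      rw [hbf]
      rcases he : e i with p | q
      · rw [hx'def]
        simp [he]
      · rw [hx'def]
        simp only [he, Sum.elim_inr]
        by_cases hq : q ∈ BP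
        · exfalso
          have hqS : q ∉ S := hBPS q hq
          have hsome : (ρ (e.symm (Sum.inr q))).isSome := by
            have hi : e.symm (Sum.inr q) = i := by rw [← he, Equiv.symm_apply_apply]
            rw [hi, hb]
            rfl
          exact hqS (Finset.mem_filter.2 ⟨Finset.mem_univ _, hsome⟩)
        · rw [if_neg hq]
    have hfx' : f x' = some false := by
      rw [hfdef]
      unfold ff
      rw [if_neg, if_pos]
      · refine ⟨BP, BM, ⟨hBPne, ?_, hcov⟩, fun q hq => by rw [hYx' q, if_pos hq],
          fun p _ => hXx' p⟩
        calc BP.card + BM.card ≤ (2 * n * (2 * (Nat.log 2 n + 1)) + 1) + n :=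
              add_le_add hBPcard hBMcard
          _ = Kb n := rfl
      · rintro ⟨p, hone⟩
        have h2 := hone.1
        rw [hXx' p] at h2
        simp at h2
    have hmem := hcert.2 x' hcons
    rw [hfx'] at hmem
    simp at hmem
  -- (5) the {0,*} lower bound at z
  · have hne : ({k | ∃ ρ, IsCert f {some false, none} ρ z ∧ psize ρ ≤ k}).Nonempty := by
      refine ⟨psize (fun i => some (z i)), fun i => some (z i), ⟨?_, ?_⟩, le_rfl⟩
      · intro i b hb
        exact (Option.some_inj.1 hb)
      · intro x' hx'
        have hxz : x' = z := funext fun i => hx' i (z i) rfl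
        rw [hxz, hfz]
        exact Set.mem_insert_of_mem _ rfl
    obtain ⟨ρ, hcert, hle⟩ := Nat.sInf_mem hne
    suffices h : n ^ 2 ≤ 100 * psize ρ by
      have h2 : psize ρ ≤ Cx f {some false, none} z := hle
      calc n ^ 2 ≤ 100 * psize ρ := h
        _ ≤ 100 * Cx f {some false, none} z := by omega
    by_contra hlt
    push_neg at hlt
    set SP : Finset (F × F) :=
      (Finset.univ : Finset (F × F)).filter (fun p => (ρ (e.symm (Sum.inl p))).isSome) with hSPdef
    have hSPcard : SP.card ≤ psize ρ := by
      refine Finset.card_le_card_of_injOn (fun p => e.symm (Sum.inl p)) ?_ ?_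
      · intro p hp
        exact Finset.mem_filter.2 ⟨Finset.mem_univ _, (Finset.mem_filter.1 hp).2⟩
      · intro a _ b _ hab
        have h2 := congrArg e hab
        simpa [Equiv.apply_symm_apply] using h2
    have hp0 : ∃ p0 : F × F, p0 ∉ SP := by
      by_contra hall
      push_neg at hall
      have hsub : (Finset.univ : Finset (F × F)) ⊆ SP := fun x _ => hall x
      have h2 := Finset.card_le_card hsub
      rw [Finset.card_univ, Fintype.card_prod, hcard, ← sq] at h2
      omega
    obtain ⟨p0, hp0S⟩ := hp0
    set x' : ι → Bool := fun i =>
      Sum.elim (fun p => if p = p0 then true else false) (fun _ => false) (e i) with hx'def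
    have hXx' : ∀ p : F × F, Xc e x' p = (if p = p0 then true else false) := by
      intro p
      rw [hx'def]
      unfold Xc
      simp [Equiv.apply_symm_apply]
    have hYx' : ∀ q : F × F, Yc e x' q = false := by
      intro q
      rw [hx'def]
      unfold Yc
      simp [Equiv.apply_symm_apply]
    have hcons : Consistent ρ x' := by
      intro i b hb
      have hbf : b = false := by
        have h2 := hcert.1 i b hb
        simpa [hzdef] using h2.symm
      rw [hbf]
      rcases he : e i with p | q
      · rw [hx'def]
        simp only [he, Sum.elim_inl]
        by_cases hp : p = p0
        · exfalso
          have hsome : (ρ (e.symm (Sum.inl p))).isSome := by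
            have hi : e.symm (Sum.inl p) = i := by rw [← he, Equiv.symm_apply_apply]
            rw [hi, hb]
            rfl
          apply hp0S
          rw [← hp]
          exact Finset.mem_filter.2 ⟨Finset.mem_univ _, hsome⟩
        · rw [if_neg hp]
      · rw [hx'def]
        simp [he]
    have hfx' : f x' = some true := by
      rw [hfdef]
      unfold ff
      rw [if_pos]
      refine ⟨p0, ?_, fun q _ => hYx' q⟩
      rw [hXx' p0, if_pos rfl]
    have hmem := hcert.2 x' hcons
    rw [hfx'] at hmem
    simp at hmem

end Master


end QP2

/-- Quadratic solution to Puzzle 2: for every sufficiently large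
prime power `n` there is a partial function on `2n²` bits with
`C₁ ≤ n + 1`, `C₀ ≤ 200·n·log₂ n`, and a `*`-input `z` with
`C_{0̄}(f,z), C_{1̄}(f,z) ≥ n²/100`.  (Here `{some true, none}` is the output
set `0̄ = {1,*}` and `{some false, none}` is `1̄ = {0,*}`.) -/
theorem quadratic_puzzle2 :
    ∃ N : ℕ, ∀ n ≥ N, IsPrimePow n →
      ∃ f : (Fin (2 * n ^ 2) → Bool) → Option Bool, ∃ z : Fin (2 * n ^ 2) → Bool,
        f z = none ∧
        CC f {some true} ≤ n + 1 ∧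
        (CC f {some false} : ℝ) ≤ 200 * (n : ℝ) * Real.logb 2 n ∧
        (n : ℝ) ^ 2 / 100 ≤ (Cx f {some true, none} z : ℝ) ∧
        (n : ℝ) ^ 2 / 100 ≤ (Cx f {some false, none} z : ℝ) := by
  refine ⟨10000, fun n hn hpp => ?_⟩
  obtain ⟨p, k, hp, hk, rfl⟩ := hpp
  haveI : Fact p.Prime := ⟨Nat.prime_iff.mpr hp⟩
  set F := GaloisField p k with hF
  haveI : Fintype F := Fintype.ofFinite F
  haveI : DecidableEq F := Classical.decEq F
  have hcard : Fintype.card F = p ^ k := by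
    rw [← Nat.card_eq_fintype_card]
    exact GaloisField.card p k (Nat.pos_iff_ne_zero.mp hk)
  have hcards : Fintype.card (Fin (2 * (p ^ k) ^ 2)) = Fintype.card ((F × F) ⊕ (F × F)) := by
    rw [Fintype.card_fin, Fintype.card_sum, Fintype.card_prod, hcard]
    ring
  set e := Fintype.equivOfCardEq hcards with hedef
  obtain ⟨f, z, h1, h2, h3, h4, h5⟩ := QP2.master (p ^ k) hcard hn e
  have hNpos : 0 < p ^ k := by positivity
  have hN2 : (2 : ℝ) ≤ ((p ^ k : ℕ) : ℝ) := by
    have : (2 : ℕ) ≤ p ^ k := by omega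
    exact_mod_cast this
  have hNR : (0 : ℝ) < ((p ^ k : ℕ) : ℝ) := by linarith
  have hlogb1 : (1 : ℝ) ≤ Real.logb 2 ((p ^ k : ℕ) : ℝ) := by
    have := Real.logb_le_logb_of_le (b := 2) (by norm_num) (by norm_num : (0:ℝ) < 2) hN2
    rwa [Real.logb_self_eq_one (by norm_num)] at this
  have hlogL : ((Nat.log 2 (p ^ k) : ℕ) : ℝ) ≤ Real.logb 2 ((p ^ k : ℕ) : ℝ) := by
    have hpl : (2 : ℕ) ^ Nat.log 2 (p ^ k) ≤ p ^ k :=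
      Nat.pow_log_le_self 2 (Nat.pos_iff_ne_zero.mp hNpos)
    have hplR : (2 : ℝ) ^ Nat.log 2 (p ^ k) ≤ ((p ^ k : ℕ) : ℝ) := by exact_mod_cast hpl
    have h2 : Real.logb 2 ((2 : ℝ) ^ Nat.log 2 (p ^ k)) = (Nat.log 2 (p ^ k) : ℝ) := by
      rw [Real.logb_pow, Real.logb_self_eq_one (by norm_num), mul_one]
    calc ((Nat.log 2 (p ^ k) : ℕ) : ℝ) = Real.logb 2 ((2 : ℝ) ^ Nat.log 2 (p ^ k)) := h2.symm
      _ ≤ Real.logb 2 ((p ^ k : ℕ) : ℝ) :=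
          Real.logb_le_logb_of_le (by norm_num) (by positivity) hplR
  refine ⟨f, z, h1, h2, ?_, ?_, ?_⟩
  · -- C0 bound over ℝ
    have hKb : ((QP2.Kb (p ^ k) : ℕ) : ℝ) ≤ 200 * ((p ^ k : ℕ) : ℝ) *
        Real.logb 2 ((p ^ k : ℕ) : ℝ) := by
      unfold QP2.Kb
      push_cast
      push_cast at hlogL hlogb1 hN2
      have hP0 : (0:ℝ) ≤ (p:ℝ) ^ k := by positivity
      nlinarith [hlogL, hlogb1, hN2, hP0,
        mul_nonneg hP0 (by linarith : (0:ℝ) ≤ Real.logb 2 ((p:ℝ) ^ k) - ((Nat.log 2 (p ^ k) : ℕ) : ℝ)),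
        mul_nonneg hP0 (by linarith : (0:ℝ) ≤ Real.logb 2 ((p:ℝ) ^ k) - 1)]
    have h3R : ((CC f {some false} : ℕ) : ℝ) ≤ ((QP2.Kb (p ^ k) : ℕ) : ℝ) := by
      exact_mod_cast h3
    calc ((CC f {some false} : ℕ) : ℝ) ≤ _ := h3R
      _ ≤ _ := hKb
  · rw [div_le_iff₀ (by norm_num : (0:ℝ) < 100)]
    have h4R : (((p ^ k) ^ 2 : ℕ) : ℝ) ≤ ((100 * Cx f {some true, none} z : ℕ) : ℝ) := by
      exact_mod_cast h4
    push_cast at h4R ⊢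
    linarith
  · rw [div_le_iff₀ (by norm_num : (0:ℝ) < 100)]
    have h5R : (((p ^ k) ^ 2 : ℕ) : ℝ) ≤ ((100 * Cx f {some false, none} z : ℕ) : ℝ) := by
      exact_mod_cast h5
    push_cast at h5R ⊢
    linarith
end

section
/- Existence of everywhere-almost-hittable (EAH) hypergraphs: for every sufficiently large prime power n, there exists an n-uniform hypergraph G = (V, E) with |V| = n² vertices and |E| = n² edges such that for every set F ⊆ V of size |F| ≤ n²/100, there exists a set H ⊆ V with: |H| ≤ 100·n·log₂ n, H is disjoint from F, and the number of edges e ∈ E with H ∩ e = ∅ is at most n. -/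
/-!
Take the points of the affine plane `K × K` over a field with `n` elements as vertices and the
`n²` non-vertical lines as edges. Given `F`, call a line rich if at least half of its points lie
in `F`. Two lines meet in at most one point, so Cauchy–Schwarz applied to the number of rich lines
through each point of `F` shows that there are at most `n / 24` rich lines once `|F| ≤ n² / 100`.
A random choice of `k = 2 (⌊log₂ n⌋ + 1)` columns `{x} × K` meets `F` at all `k` points of a given
poor line with probability at most `2⁻ᵏ < n⁻²`, so some choice of columns works for all poor lines
at once. Then `H`, the union of these columns minus `F`, has at most `k n` points and misses only
rich lines.
-/

open Finset

section Incidence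

variable {ι α : Type*} [DecidableEq ι] [DecidableEq α]

theorem sq_sum_card_inter_le (L : ι → Finset α) (R : Finset ι) (F : Finset α)
    (hL : ∀ i ∈ R, ∀ j ∈ R, i ≠ j → #(L i ∩ L j) ≤ 1) :
    (∑ i ∈ R, #(L i ∩ F)) ^ 2 ≤ #F * (∑ i ∈ R, #(L i ∩ F) + #R ^ 2) := by
  have hsum : ∑ q ∈ F, #{i ∈ R | q ∈ L i} = ∑ i ∈ R, #(L i ∩ F) := by
    refine (sum_card_bipartiteAbove_eq_sum_card_bipartiteBelow (r := fun q i => q ∈ L i)).trans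
      (sum_congr rfl fun i _ => ?_)
    rw [bipartiteBelow, filter_mem_eq_inter, inter_comm]
  have hsq : ∑ q ∈ F, #{i ∈ R | q ∈ L i} ^ 2 = ∑ p ∈ R ×ˢ R, #(L p.1 ∩ L p.2 ∩ F) := by
    simp_rw [sq, ← card_product, ← filter_product]
    refine (sum_card_bipartiteAbove_eq_sum_card_bipartiteBelow
      (r := fun q (p : ι × ι) => q ∈ L p.1 ∧ q ∈ L p.2)).trans (sum_congr rfl fun p _ => congrArg card ?_)
    ext q
    simp only [bipartiteBelow, mem_filter, mem_inter]
    tauto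
  have hpair : ∀ p ∈ R ×ˢ R,
      #(L p.1 ∩ L p.2 ∩ F) ≤ (if p.1 = p.2 then #(L p.1 ∩ F) else 0) + 1 := by
    rintro ⟨i, j⟩ hij
    rw [mem_product] at hij
    by_cases h : i = j
    · subst h; simp
    · simpa [h] using (card_le_card inter_subset_left).trans (hL i hij.1 j hij.2 h)
  calc (∑ i ∈ R, #(L i ∩ F)) ^ 2 = (∑ q ∈ F, #{i ∈ R | q ∈ L i}) ^ 2 := by rw [hsum]
    _ ≤ #F * ∑ q ∈ F, #{i ∈ R | q ∈ L i} ^ 2 := sq_sum_le_card_mul_sum_sq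
    _ ≤ #F * (∑ i ∈ R, #(L i ∩ F) + #R ^ 2) := by
      gcongr
      rw [hsq]
      refine (sum_le_sum hpair).trans_eq ?_
      rw [sum_add_distrib, sum_product, sum_const, card_product, smul_eq_mul, mul_one, sq]
      simp [sum_ite_eq]

theorem card_rich_le (L : ι → Finset α) (R : Finset ι) (F : Finset α) {n : ℕ} (hn : 0 < n)
    (hL : ∀ i ∈ R, ∀ j ∈ R, i ≠ j → #(L i ∩ L j) ≤ 1) (hcard : ∀ i ∈ R, #(L i) ≤ n)
    (hrich : ∀ i ∈ R, n ≤ 2 * #(L i ∩ F)) (hF : 100 * #F ≤ n ^ 2) : 24 * #R ≤ n := by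
  set S := ∑ i ∈ R, #(L i ∩ F)
  set m := #R
  have hlow : m * n ≤ 2 * S := by
    rw [mul_sum]; exact card_nsmul_le_sum _ _ _ hrich
  have hup : S ≤ m * n :=
    sum_le_card_nsmul _ _ _ fun i hi => (card_le_card inter_subset_left).trans (hcard i hi)
  have hCS : S ^ 2 ≤ #F * (S + m ^ 2) := sq_sum_card_inter_le L R F hL
  have hscaled : 25 * m ^ 2 * n ^ 2 ≤ (m * n + m ^ 2) * n ^ 2 := by
    calc 25 * m ^ 2 * n ^ 2 ≤ 100 * S ^ 2 := by nlinarith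
      _ ≤ (100 * #F) * (S + m ^ 2) := by nlinarith
      _ ≤ n ^ 2 * (m * n + m ^ 2) := by gcongr
      _ = (m * n + m ^ 2) * n ^ 2 := mul_comm _ _
  have hm : 24 * m * m ≤ n * m := by
    have := Nat.le_of_mul_le_mul_right hscaled (by positivity)
    nlinarith
  rcases Nat.eq_zero_or_pos m with hm0 | hm0
  · simp [hm0]
  · exact Nat.le_of_mul_le_mul_right hm hm0

end Incidence

theorem exists_tuple_forall_exists_notMem {ι X : Type*} [Fintype X] [Nonempty X] [DecidableEq X]
    (s : Finset ι) (A : ι → Finset X) {k : ℕ} (hs : #s < 2 ^ k)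
    (hA : ∀ i ∈ s, 2 * #(A i) ≤ Fintype.card X) :
    ∃ g : Fin k → X, ∀ i ∈ s, ∃ j, g j ∉ A i := by
  have hcount : ∑ g : Fin k → X, #{i ∈ s | ∀ j, g j ∈ A i} = ∑ i ∈ s, #(A i) ^ k := by
    refine (sum_card_bipartiteAbove_eq_sum_card_bipartiteBelow
      (r := fun (g : Fin k → X) i => ∀ j, g j ∈ A i)).trans (sum_congr rfl fun i _ => ?_)
    rw [← Fintype.card_piFinset_const]
    congr 1
    ext g
    simp [bipartiteBelow, Fintype.mem_piFinset]
  have hlt : ∑ i ∈ s, #(A i) ^ k < ∑ _g : Fin k → X, 1 := by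
    rw [sum_const, card_univ, Fintype.card_fun, Fintype.card_fin, smul_eq_mul, mul_one]
    refine lt_of_mul_lt_mul_left (a := 2 ^ k) ?_ (Nat.zero_le _)
    calc 2 ^ k * ∑ i ∈ s, #(A i) ^ k = ∑ i ∈ s, (2 * #(A i)) ^ k := by
          rw [mul_sum]; simp_rw [mul_pow]
      _ ≤ #s * Fintype.card X ^ k := sum_le_card_nsmul _ _ _ fun i hi => by gcongr; exact hA i hi
      _ < 2 ^ k * Fintype.card X ^ k := by gcongr
  obtain ⟨g, -, hg⟩ := exists_lt_of_sum_lt (hcount ▸ hlt)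
  refine ⟨g, fun i hi => ?_⟩
  by_contra! h
  exact (Nat.lt_one_iff.1 hg).not_gt (card_pos.2 ⟨i, mem_filter.2 ⟨hi, h⟩⟩)

section Graph

variable {X Y : Type*} [Fintype X] [DecidableEq X] [DecidableEq Y]

def graphFinset (φ : X → Y) : Finset (X × Y) := univ.image fun x => (x, φ x)

theorem mem_graphFinset {φ : X → Y} {p : X × Y} : p ∈ graphFinset φ ↔ φ p.1 = p.2 := by
  constructor
  · intro h
    obtain ⟨x, -, rfl⟩ := mem_image.1 h
    rfl
  · intro h
    exact mem_image.2 ⟨p.1, mem_univ _, by rw [h]⟩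

theorem graphFinset_injective : Function.Injective (graphFinset : (X → Y) → Finset (X × Y)) :=
  fun φ ψ h => funext fun x =>
    (mem_graphFinset.1 (h ▸ mem_graphFinset.2 rfl : (x, φ x) ∈ graphFinset ψ)).symm

theorem card_graphFinset_inter (φ : X → Y) (F : Finset (X × Y)) :
    #(graphFinset φ ∩ F) = #{x | (x, φ x) ∈ F} := by
  rw [← filter_mem_eq_inter, graphFinset, filter_image,
    card_image_of_injective _ fun _ _ h => (Prod.ext_iff.1 h).1]

theorem card_graphFinset (φ : X → Y) : #(graphFinset φ) = Fintype.card X :=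
  card_image_of_injective _ fun _ _ h => (Prod.ext_iff.1 h).1

theorem exists_hittingSet_of_graphs [Nonempty X] [Fintype Y] (E : Finset (X → Y))
    (hE : ∀ φ ∈ E, ∀ ψ ∈ E, φ ≠ ψ → #(graphFinset φ ∩ graphFinset ψ) ≤ 1)
    (F : Finset (X × Y)) (hF : 100 * #F ≤ Fintype.card X ^ 2) {k : ℕ} (hk : #E < 2 ^ k) :
    ∃ H : Finset (X × Y), #H ≤ k * Fintype.card Y ∧ Disjoint H F ∧
      24 * #{φ ∈ E | H ∩ graphFinset φ = ∅} ≤ Fintype.card X := by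
  set n := Fintype.card X
  set R := {φ ∈ E | n ≤ 2 * #(graphFinset φ ∩ F)}
  obtain ⟨g, hg⟩ := exists_tuple_forall_exists_notMem {φ ∈ E | ¬ n ≤ 2 * #(graphFinset φ ∩ F)}
    (fun φ => {x | (x, φ x) ∈ F}) ((card_filter_le _ _).trans_lt hk) fun φ hφ => by
      rw [← card_graphFinset_inter]; exact (not_le.1 (mem_filter.1 hφ).2).le
  set H := (univ.image g ×ˢ univ) \ F
  have hcard : #H ≤ k * Fintype.card Y :=
    calc #H ≤ #(univ.image g ×ˢ (univ : Finset Y)) := card_le_card sdiff_subset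
      _ ≤ k * Fintype.card Y := by
          rw [card_product, card_univ]
          gcongr
          exact card_image_le.trans_eq (by simp)
  have hmissed : {φ ∈ E | H ∩ graphFinset φ = ∅} ⊆ R := by
    intro φ hφ
    rw [mem_filter] at hφ ⊢
    refine ⟨hφ.1, not_not.1 fun hpoor => ?_⟩
    obtain ⟨j, hj⟩ := hg φ (mem_filter.2 ⟨hφ.1, hpoor⟩)
    have : (g j, φ (g j)) ∈ H ∩ graphFinset φ := by
      simp only [H, mem_inter, mem_sdiff, mem_product, mem_image, mem_univ, true_and,
        mem_graphFinset, and_true]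
      exact ⟨⟨j, rfl⟩, fun h => hj (mem_filter.2 ⟨mem_univ _, h⟩)⟩
    simp [hφ.2] at this
  refine ⟨H, hcard, sdiff_disjoint, ?_⟩
  calc 24 * #{φ ∈ E | H ∩ graphFinset φ = ∅} ≤ 24 * #R := by gcongr
    _ ≤ n := card_rich_le graphFinset R F Fintype.card_pos
        (fun φ hφ ψ hψ => hE φ (mem_filter.1 hφ).1 ψ (mem_filter.1 hψ).1)
        (fun φ _ => (card_graphFinset φ).le) (fun φ hφ => (mem_filter.1 hφ).2) hF

end Graph

section Affine

variable (K : Type*) [Field K] [Fintype K] [DecidableEq K]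

def affineMaps : Finset (K → K) := univ.image fun p : K × K => fun x => p.1 * x + p.2

theorem card_affineMaps : #(affineMaps K) = Fintype.card K ^ 2 := by
  rw [affineMaps, card_image_of_injective, card_univ, Fintype.card_prod, sq]
  intro p q h
  have h0 : p.2 = q.2 := by simpa using congrFun h 0
  have h1 : p.1 + p.2 = q.1 + q.2 := by simpa using congrFun h 1
  exact Prod.ext (by rw [h0] at h1; exact add_right_cancel h1) h0

variable {K}

theorem card_graphFinset_inter_le_one {φ ψ : K → K} (hφ : φ ∈ affineMaps K)
    (hψ : ψ ∈ affineMaps K) (hne : φ ≠ ψ) : #(graphFinset φ ∩ graphFinset ψ) ≤ 1 := by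
  obtain ⟨⟨a, b⟩, -, rfl⟩ := mem_image.1 hφ
  obtain ⟨⟨c, d⟩, -, rfl⟩ := mem_image.1 hψ
  refine card_le_one.2 fun p hp q hq => ?_
  simp only [mem_inter, mem_graphFinset] at hp hq
  have hx : p.1 = q.1 := by
    by_contra hx
    have hac : a = c := by
      have : (a - c) * (p.1 - q.1) = 0 := by linear_combination hp.1 - hp.2 - hq.1 + hq.2
      exact sub_eq_zero.1 ((mul_eq_zero.1 this).resolve_right (sub_ne_zero.2 hx))
    subst hac
    exact hne (funext fun x => by simpa using by linear_combination hp.1 - hp.2)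
  exact Prod.ext hx (by rw [← hp.1, ← hq.1, hx])

end Affine

theorem cast_two_mul_log_succ_mul_le {n : ℕ} (hn : 2 ≤ n) :
    ((2 * (Nat.log 2 n + 1) * n : ℕ) : ℝ) ≤ 100 * n * Real.logb 2 n := by
  have hlog : (Nat.log 2 n : ℝ) ≤ Real.logb 2 n := by exact_mod_cast Real.natLog_le_logb n 2
  have hone : (1 : ℝ) ≤ Real.logb 2 n := by
    rw [Real.le_logb_iff_rpow_le one_lt_two (by positivity), Real.rpow_one]
    exact_mod_cast hn
  have hn0 : (0 : ℝ) ≤ n := n.cast_nonneg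
  push_cast
  nlinarith

theorem sq_lt_two_pow_two_mul_log_succ (n : ℕ) : n ^ 2 < 2 ^ (2 * (Nat.log 2 n + 1)) := by
  rw [mul_comm, pow_mul]
  exact Nat.pow_lt_pow_left (Nat.lt_pow_succ_log_self one_lt_two n) two_ne_zero

section Hittable

variable {α β : Type*} [DecidableEq α] [DecidableEq β]

def IsAlmostHittable (E : Finset (Finset α)) (r s : ℝ) (t : ℕ) : Prop :=
  ∀ F : Finset α, (#F : ℝ) ≤ r →
    ∃ H : Finset α, (#H : ℝ) ≤ s ∧ Disjoint H F ∧ #{e ∈ E | H ∩ e = ∅} ≤ t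

theorem IsAlmostHittable.map {E : Finset (Finset α)} {r s : ℝ} {t : ℕ}
    (h : IsAlmostHittable E r s t) (σ : α ≃ β) :
    IsAlmostHittable (E.map σ.finsetCongr.toEmbedding) r s t := by
  intro F hF
  obtain ⟨H, hH, hdisj, hmiss⟩ := h (σ.finsetCongr.symm F) (by simpa using hF)
  refine ⟨σ.finsetCongr H, by simpa using hH, ?_, ?_⟩
  · rw [← σ.finsetCongr.apply_symm_apply F]
    exact (disjoint_map _).2 hdisj
  · rw [filter_map, card_map]
    convert hmiss using 3
    simp [← map_inter]

end Hittable

theorem exists_isAlmostHittable_affineLines (K : Type*) [Field K] [Fintype K] [DecidableEq K]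
    {n : ℕ} (hK : Fintype.card K = n) (hn : 2 ≤ n) :
    ∃ E : Finset (Finset (K × K)), #E = n ^ 2 ∧ (∀ e ∈ E, #e = n) ∧
      IsAlmostHittable E ((n : ℝ) ^ 2 / 100) (100 * n * Real.logb 2 n) n := by
  subst hK
  have : Nonempty K := Fintype.card_pos_iff.1 (by omega)
  refine ⟨(affineMaps K).image graphFinset, ?_, ?_, fun F hF => ?_⟩
  · rw [card_image_of_injective _ graphFinset_injective, card_affineMaps]
  · simp only [mem_image]
    rintro _ ⟨φ, -, rfl⟩
    exact card_graphFinset φ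
  have hF' : 100 * #F ≤ Fintype.card K ^ 2 := by
    have : (100 : ℝ) * #F ≤ (Fintype.card K : ℝ) ^ 2 := by linarith
    exact_mod_cast this
  obtain ⟨H, hH, hdisj, hmiss⟩ := exists_hittingSet_of_graphs (affineMaps K)
    (fun φ hφ ψ hψ => card_graphFinset_inter_le_one hφ hψ) F hF'
    ((card_affineMaps K).trans_lt (sq_lt_two_pow_two_mul_log_succ _))
  refine ⟨H, ?_, hdisj, ?_⟩
  · exact (Nat.cast_le.2 (hH.trans_eq (by ring))).trans (cast_two_mul_log_succ_mul_le hn)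
  · rw [filter_image, card_image_of_injective _ graphFinset_injective]
    omega

/-- Existence of everywhere-almost-hittable (EAH) hypergraphs:
for every sufficiently large prime power `n` there is an `n`-uniform hypergraph
on `n²` vertices with `n²` edges such that for every forbidden set `F` with
`|F| ≤ n²/100` there is a set `H` with `|H| ≤ 100·n·log₂ n`, disjoint from `F`,
missing at most `n` edges. -/
theorem eah_hypergraph_exists :
    ∃ N : ℕ, ∀ n ≥ N, IsPrimePow n →
      ∃ E : Finset (Finset (Fin (n ^ 2))),
        E.card = n ^ 2 ∧ (∀ e ∈ E, e.card = n) ∧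
        ∀ F : Finset (Fin (n ^ 2)), (F.card : ℝ) ≤ (n : ℝ) ^ 2 / 100 →
          ∃ H : Finset (Fin (n ^ 2)),
            (H.card : ℝ) ≤ 100 * (n : ℝ) * Real.logb 2 n ∧
            Disjoint H F ∧
            (E.filter fun e => H ∩ e = ∅).card ≤ n := by
  refine ⟨0, fun n _ hn => ?_⟩
  -- any field structure on `Fin n` will do, it need not extend the ring structure `Fin n` carries
  let : Field (Fin n) := (Fintype.nonempty_field_iff.2 (by rwa [Fintype.card_fin])).some
  obtain ⟨E, hcard, huniform, hhit⟩ :=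
    exists_isAlmostHittable_affineLines (Fin n) (Fintype.card_fin n) hn.two_le
  let σ : Fin n × Fin n ≃ Fin (n ^ 2) := finProdFinEquiv.trans (finCongr (sq n).symm)
  refine ⟨E.map σ.finsetCongr.toEmbedding, by rw [card_map, hcard], ?_, hhit.map σ⟩
  rintro _ hmem
  obtain ⟨e, he, rfl⟩ := mem_map.1 hmem
  simpa using huniform e he
end

section
/- Construction Puzzle 2 ⇒ Puzzle 1 (cheat sheets): for every partial boolean function f : {0,1}^n → {0,1,*} with n ≥ 2 and every input x with f(x) = *, there exists a total boolean function g : {0,1}^m → {0,1} on m ≤ 3·n²·(⌈log₂ n⌉)² bits such that C₀(g) ≥ min{C_{0̄}(f, x), C_{1̄}(f, x)} and UC₁(g) ≤ 3·C(f)·(⌈log₂ n⌉)². -/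
set_option linter.unusedSectionVars false

namespace CheatSheet

variable {ι κ : Type} [Fintype ι] [Fintype κ]

/-- The full restriction of an input. -/
def fullCert (x : ι → Bool) : ι → Option Bool := fun i => some (x i)

lemma consistent_fullCert (x : ι → Bool) : Consistent (fullCert x) x := by
  intro i b h
  have : some (x i) = some b := h
  exact (Option.some.injEq _ _ ▸ this)

lemma eq_of_consistent_fullCert {x y : ι → Bool} (h : Consistent (fullCert x) y) : y = x := by
  funext i
  exact h i (x i) rfl

lemma psize_le_card (ρ : ι → Option Bool) : psize ρ ≤ Fintype.card ι := by
  classical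
  exact (Finset.card_filter_le _ _)

lemma isCert_fullCert (f : (ι → Bool) → Option Bool) (S : Set (Option Bool)) (x : ι → Bool)
    (h : f x ∈ S) : IsCert f S (fullCert x) x := by
  refine ⟨consistent_fullCert x, fun x' hx' => ?_⟩
  rw [eq_of_consistent_fullCert hx']
  exact h

lemma Cx_le_card {f : (ι → Bool) → Option Bool} {S : Set (Option Bool)} {x : ι → Bool}
    (h : f x ∈ S) : Cx f S x ≤ Fintype.card ι :=
  Nat.sInf_le ⟨fullCert x, isCert_fullCert f S x h, psize_le_card _⟩

lemma card_mem_CCset (f : (ι → Bool) → Option Bool) (S : Set (Option Bool)) :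
    Fintype.card ι ∈ {k | ∀ x, f x ∈ S → ∃ ρ, IsCert f S ρ x ∧ psize ρ ≤ k} :=
  fun x hx => ⟨fullCert x, isCert_fullCert f S x hx, psize_le_card _⟩

lemma CC_le_card (f : (ι → Bool) → Option Bool) (S : Set (Option Bool)) :
    CC f S ≤ Fintype.card ι :=
  Nat.sInf_le (card_mem_CCset f S)

lemma Cmax_le_card (f : (ι → Bool) → Option Bool) : Cmax f ≤ Fintype.card ι :=
  max_le (CC_le_card f _) (CC_le_card f _)

/-- Certificates of size at most `CC f S` exist for all inputs in `S`. -/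
lemma exists_cert_CC (f : (ι → Bool) → Option Bool) (S : Set (Option Bool)) (z : ι → Bool)
    (h : f z ∈ S) : ∃ ρ, IsCert f S ρ z ∧ psize ρ ≤ CC f S := by
  have hne : {k | ∀ x, f x ∈ S → ∃ ρ, IsCert f S ρ x ∧ psize ρ ≤ k}.Nonempty :=
    ⟨Fintype.card ι, card_mem_CCset f S⟩
  exact Nat.sInf_mem hne z h

lemma not_isCert_of_psize_lt {f : (ι → Bool) → Option Bool} {S : Set (Option Bool)}
    {x : ι → Bool} {ρ : ι → Option Bool} (h : psize ρ < Cx f S x) : ¬ IsCert f S ρ x := by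
  intro hc
  have : Cx f S x ≤ psize ρ := Nat.sInf_le ⟨ρ, hc, le_rfl⟩
  omega

end CheatSheet


section Transport

variable {ι κ : Type} [Fintype ι] [Fintype κ]

lemma psize_comp_equiv (e : ι ≃ κ) (ρ : κ → Option Bool) :
    psize (fun i => ρ (e i)) = psize ρ := by
  classical
  unfold psize
  refine Finset.card_bij' (fun i _ => e i) (fun j _ => e.symm j) ?_ ?_ ?_ ?_
  · intro i hi
    simpa using (Finset.mem_filter.mp hi).2
  · intro j hj
    simp only [Finset.mem_filter, Finset.mem_univ, true_and] at hj ⊢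
    simpa using hj
  · intro i _; simp
  · intro j _; simp

lemma consistent_comp_equiv (e : ι ≃ κ) (ρ : κ → Option Bool) (x : κ → Bool)
    (h : Consistent ρ x) : Consistent (fun i => ρ (e i)) (fun i => x (e i)) :=
  fun i b hb => h (e i) b hb

lemma consistent_comp_equiv' (e : ι ≃ κ) (ρ : κ → Option Bool) (x : ι → Bool)
    (h : Consistent (fun i => ρ (e i)) x) : Consistent ρ (fun j => x (e.symm j)) := by
  intro j b hb
  have := h (e.symm j) b (by simpa using hb)
  simpa using this

/-- Transport of membership in the `C0`-defining set along an equivalence. -/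
lemma C0set_mem_transport (e : ι ≃ κ) (g : (ι → Bool) → Bool) {K : ℕ}
    (hK : K ∈ {k | ∀ y, totalize (fun y : κ → Bool => g (fun i => y (e i))) y ∈ ({some false} : Set (Option Bool)) →
      ∃ ρ, IsCert (totalize (fun y : κ → Bool => g (fun i => y (e i)))) {some false} ρ y ∧ psize ρ ≤ k}) :
    K ∈ {k | ∀ x, totalize g x ∈ ({some false} : Set (Option Bool)) →
      ∃ ρ, IsCert (totalize g) {some false} ρ x ∧ psize ρ ≤ k} := by
  intro x hx
  set g' : (κ → Bool) → Bool := fun y => g (fun i => y (e i)) with hg'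
  have hyx : (fun i => x (e.symm (e i))) = x := by funext i; simp
  have hy : totalize g' (fun j => x (e.symm j)) ∈ ({some false} : Set (Option Bool)) := by
    simpa [totalize, hg', hyx] using hx
  obtain ⟨ρ, ⟨hcons, hcert⟩, hsize⟩ := hK _ hy
  refine ⟨fun i => ρ (e i), ⟨?_, ?_⟩, ?_⟩
  · intro i b hb
    have := hcons (e i) b hb
    simpa using this
  · intro x' hx'
    have h2 : Consistent ρ (fun j => x' (e.symm j)) := consistent_comp_equiv' e ρ x' hx'
    have := hcert _ h2
    have hyx' : (fun i => x' (e.symm (e i))) = x' := by funext i; simp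
    simpa [totalize, hg', hyx'] using this
  · rw [psize_comp_equiv e ρ]; exact hsize

/-- Transport of membership in the `UC1`-defining set along an equivalence. -/
lemma UC1set_mem_transport (e : ι ≃ κ) (g : (ι → Bool) → Bool) {k : ℕ}
    (hk : k ∈ {k | ∃ U : Set (ι → Option Bool),
      (∀ ρ ∈ U, psize ρ ≤ k ∧ ∀ x, Consistent ρ x → g x = true) ∧
      ∀ x, g x = true → ∃! ρ, ρ ∈ U ∧ Consistent ρ x}) :
    k ∈ {k | ∃ U : Set (κ → Option Bool),
      (∀ ρ ∈ U, psize ρ ≤ k ∧ ∀ y, Consistent ρ y → (g (fun i => y (e i))) = true) ∧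
      ∀ y, (g (fun i => y (e i))) = true → ∃! ρ, ρ ∈ U ∧ Consistent ρ y} := by
  obtain ⟨U, hU, hcov⟩ := hk
  refine ⟨(fun (ρ : ι → Option Bool) => (fun j => ρ (e.symm j))) '' U, ?_, ?_⟩
  · rintro ρ' ⟨ρ, hρU, rfl⟩
    refine ⟨?_, ?_⟩
    · have := psize_comp_equiv e.symm ρ
      simpa using this.trans_le (hU ρ hρU).1
    · intro y hy
      refine (hU ρ hρU).2 _ ?_
      intro i b hb
      have := hy (e i) b (by simpa using hb)
      exact this
  · intro y hy
    obtain ⟨ρ, ⟨hρU, hρc⟩, huniq⟩ := hcov _ hy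
    refine ⟨fun j => ρ (e.symm j), ⟨⟨ρ, hρU, rfl⟩, ?_⟩, ?_⟩
    · intro j b hb
      have := hρc (e.symm j) b hb
      simpa using this
    · rintro ρ'' ⟨⟨σ, hσU, rfl⟩, hσc⟩
      have hσρ : σ = ρ := by
        refine huniq σ ⟨hσU, ?_⟩
        intro i b hb
        exact hσc (e i) b (by simpa using hb)
      rw [hσρ]

end Transport


namespace CS

open Finset

abbrev CellC (L c : ℕ) := (Fin L → Bool) × Fin L × Fin c × Option (Fin L)
abbrev II (n L c : ℕ) := (Fin L × Fin n) ⊕ CellC L c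

variable {n L c : ℕ}

/-- The index (in `Fin (2^L)`) encoded by the index bits of pair `p` of the
certificate for copy `i` stored in cell `a`. -/
def idxF (z : II n L c → Bool) (a : Fin L → Bool) (i : Fin L) (p : Fin c) : Fin (2 ^ L) :=
  finFunctionFinEquiv (fun t => finTwoEquiv.symm (z (Sum.inr (a, i, p, some t))))

/-- The value bit of pair `p`. -/
def valF (z : II n L c → Bool) (a : Fin L → Bool) (i : Fin L) (p : Fin c) : Bool :=
  z (Sum.inr (a, i, p, none))

/-- Pairs pointing at coordinate `j`. -/
def PP (z : II n L c → Bool) (a : Fin L → Bool) (i : Fin L) (j : Fin n) : Finset (Fin c) :=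
  Finset.univ.filter fun p => ((idxF z a i p : ℕ) = (j : ℕ))

/-- The partial assignment decoded from cell `a` for copy `i`. -/
def sig (z : II n L c → Bool) (a : Fin L → Bool) (i : Fin L) : Fin n → Option Bool :=
  fun j => if h : (PP z a i j).Nonempty then some (valF z a i ((PP z a i j).min' h)) else none

/-- The `i`-th copy of the `f`-input. -/
def yy (z : II n L c → Bool) (i : Fin L) : Fin n → Bool := fun j => z (Sum.inl (i, j))

variable (f : (Fin n → Bool) → Option Bool)

/-- Address `a` is valid for input `z`. -/
def ValidAt (z : II n L c → Bool) (a : Fin L → Bool) : Prop :=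
  ∀ i : Fin L, (∀ x', Consistent (sig z a i) x' → f x' = some (a i)) ∧
    Consistent (sig z a i) (yy z i)

open Classical in
/-- The cheat sheet function. -/
noncomputable def G : (II n L c → Bool) → Bool :=
  fun z => if ∃ a, ValidAt f z a then true else false

lemma G_eq_true_iff (z : II n L c → Bool) : G f z = true ↔ ∃ a, ValidAt f z a := by
  classical
  by_cases h : ∃ a, ValidAt f z a <;> simp [G, h]

/-- The unambiguous 1-certificate attached to input `z` with valid address `a`. -/
def certOf (z : II n L c → Bool) (a : Fin L → Bool) : II n L c → Option Bool :=
  fun w => match w with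
  | Sum.inl ij => sig z a ij.1 ij.2
  | Sum.inr q => if q.1 = a then some (z (Sum.inr q)) else none

lemma sig_congr {z z' : II n L c → Bool} {a : Fin L → Bool}
    (h : ∀ q : CellC L c, q.1 = a → z' (Sum.inr q) = z (Sum.inr q)) (i : Fin L) :
    sig z' a i = sig z a i := by
  have hidx : ∀ p, idxF z' a i p = idxF z a i p := by
    intro p; unfold idxF; congr 1; funext t
    rw [h (a, i, p, some t) rfl]
  have hval : ∀ p, valF z' a i p = valF z a i p := by
    intro p; unfold valF; rw [h (a, i, p, none) rfl]
  have hPP : PP z' a i = PP z a i := by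
    funext j; unfold PP; ext p; simp [hidx]
  funext j
  unfold sig
  rw [hPP]
  split_ifs with hne
  · rw [hval]
  · rfl

lemma valid_unique {z : II n L c → Bool} {a a' : Fin L → Bool}
    (h : ValidAt f z a) (h' : ValidAt f z a') : a = a' := by
  funext i
  have e1 : f (yy z i) = some (a i) := (h i).1 _ (h i).2
  have e2 : f (yy z i) = some (a' i) := (h' i).1 _ (h' i).2
  exact Option.some.inj (e1.symm.trans e2)

lemma validAt_of_consistent {z z' : II n L c → Bool} {a : Fin L → Bool}
    (hv : ValidAt f z a) (hc : Consistent (certOf z a) z') : ValidAt f z' a := by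
  have hagree : ∀ q : CellC L c, q.1 = a → z' (Sum.inr q) = z (Sum.inr q) := by
    intro q hq
    exact hc (Sum.inr q) _ (by simp [certOf, hq])
  have hsig : ∀ i, sig z' a i = sig z a i := sig_congr hagree
  intro i
  refine ⟨fun x' hx' => (hv i).1 x' (by rwa [hsig i] at hx'), ?_⟩
  intro j b hb
  rw [hsig i] at hb
  exact hc (Sum.inl (i, j)) b (by simpa [certOf] using hb)

lemma consistent_certOf_self {z : II n L c → Bool} {a : Fin L → Bool}
    (hv : ValidAt f z a) : Consistent (certOf z a) z := by
  intro w b hb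
  match w with
  | Sum.inl ij =>
      exact (hv ij.1).2 ij.2 b (by simpa [certOf] using hb)
  | Sum.inr q =>
      by_cases hq : q.1 = a
      · simp only [certOf, hq, if_true] at hb
        exact (Option.some.inj hb)

      · simp [certOf, hq] at hb

lemma certOf_eq_of_consistent {z z' : II n L c → Bool} {a a' : Fin L → Bool}
    (hva : ValidAt f z a) (hva' : ValidAt f z' a') (hc : Consistent (certOf z' a') z) :
    certOf z' a' = certOf z a := by
  have hagree : ∀ q : CellC L c, q.1 = a' → z (Sum.inr q) = z' (Sum.inr q) := fun q hq =>
    hc (Sum.inr q) _ (by simp [certOf, hq])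
  have hvz : ValidAt f z a' := validAt_of_consistent f hva' hc
  have haa : a = a' := valid_unique f hva hvz
  subst haa
  funext w
  match w with
  | Sum.inl ij =>
      show sig z' a ij.1 ij.2 = sig z a ij.1 ij.2
      exact congrFun (sig_congr (fun q hq => (hagree q hq).symm) ij.1) ij.2
  | Sum.inr q =>
      by_cases hq : q.1 = a
      · simp [certOf, hq, hagree q hq]
      · simp [certOf, hq]

lemma isSome_sig_iff {z : II n L c → Bool} {a : Fin L → Bool} {i : Fin L} {j : Fin n} :
    (sig z a i j).isSome ↔ (PP z a i j).Nonempty := by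
  unfold sig
  split_ifs with h <;> simp [h]

lemma psize_certOf_le (hn : 0 < n) (z : II n L c → Bool) (a : Fin L → Bool) :
    psize (certOf z a) ≤ L * c + L * (c * (L + 1)) := by
  classical
  unfold psize
  set F : Finset (II n L c) := Finset.univ.filter fun w => ((certOf z a w).isSome) with hF
  have hsplit := Finset.card_filter_add_card_filter_not
    (s := F) (p := fun w => w.isLeft)
  have h1 : (F.filter fun w => w.isLeft).card ≤ L * c := by
    have hsub : F.filter (fun w => w.isLeft) ⊆
        (Finset.univ : Finset (Fin L × Fin c)).image
          (fun r : Fin L × Fin c => (Sum.inl (r.1,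
            if h : ((idxF z a r.1 r.2 : ℕ) < n) then ⟨(idxF z a r.1 r.2 : ℕ), h⟩ else ⟨0, hn⟩) :
            II n L c)) := by
      intro w hw
      simp only [Finset.mem_filter, hF, Finset.mem_univ, true_and] at hw
      obtain ⟨hsome, hleft⟩ := hw
      match w with
      | Sum.inr q => simp at hleft
      | Sum.inl ij =>
        have hs : (sig z a ij.1 ij.2).isSome := by simpa [certOf] using hsome
        have hne := isSome_sig_iff.mp hs
        set p := (PP z a ij.1 ij.2).min' hne with hp
        have hpm : p ∈ PP z a ij.1 ij.2 := (PP z a ij.1 ij.2).min'_mem hne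
        have hidx : (idxF z a ij.1 p : ℕ) = (ij.2 : ℕ) := by
          simpa [PP] using hpm
        refine Finset.mem_image.mpr ⟨(ij.1, p), Finset.mem_univ _, ?_⟩
        have hlt : (idxF z a ij.1 p : ℕ) < n := by rw [hidx]; exact ij.2.isLt
        simp only [hlt, dif_pos]
        congr 1
        obtain ⟨i1, j1⟩ := ij
        refine Prod.ext rfl ?_
        apply Fin.ext
        simpa using hidx
    calc (F.filter fun w => w.isLeft).card ≤ _ := Finset.card_le_card hsub
      _ ≤ (Finset.univ : Finset (Fin L × Fin c)).card := Finset.card_image_le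
      _ = L * c := by simp
  have h2 : (F.filter fun w => ¬ w.isLeft).card ≤ L * (c * (L + 1)) := by
    have hsub : F.filter (fun w => ¬ w.isLeft) ⊆
        (Finset.univ : Finset (Fin L × Fin c × Option (Fin L))).image
          (fun r => (Sum.inr (a, r) : II n L c)) := by
      intro w hw
      simp only [Finset.mem_filter, hF, Finset.mem_univ, true_and] at hw
      obtain ⟨hsome, hleft⟩ := hw
      match w with
      | Sum.inl ij => simp at hleft
      | Sum.inr q =>
        have hq : q.1 = a := by
          by_contra hne
          simp [certOf, hne] at hsome
        refine Finset.mem_image.mpr ⟨q.2, Finset.mem_univ _, ?_⟩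
        rw [← hq]
    calc (F.filter fun w => ¬ w.isLeft).card ≤ _ := Finset.card_le_card hsub
      _ ≤ (Finset.univ : Finset (Fin L × Fin c × Option (Fin L))).card := Finset.card_image_le
      _ = L * (c * (L + 1)) := by simp
  omega

end CS


namespace CS

open Finset

variable {n L c : ℕ} (f : (Fin n → Bool) → Option Bool)

/-- The unambiguous certificate family witnessing the `UC1` upper bound. -/
lemma UC1_mem (hn : 0 < n) :
    (L * c + L * (c * (L + 1))) ∈ {k | ∃ U : Set (II n L c → Option Bool),
      (∀ ρ ∈ U, psize ρ ≤ k ∧ ∀ z, Consistent ρ z → G f z = true) ∧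
      ∀ z, G f z = true → ∃! ρ, ρ ∈ U ∧ Consistent ρ z} := by
  refine ⟨{ρ | ∃ z a, ValidAt f z a ∧ ρ = certOf z a}, ?_, ?_⟩
  · rintro ρ ⟨z, a, hv, rfl⟩
    refine ⟨psize_certOf_le hn z a, ?_⟩
    intro z' hc
    exact (G_eq_true_iff f z').mpr ⟨a, validAt_of_consistent f hv hc⟩
  · intro z hz
    obtain ⟨a, hv⟩ := (G_eq_true_iff f z).mp hz
    refine ⟨certOf z a, ⟨⟨z, a, hv, rfl⟩, consistent_certOf_self f hv⟩, ?_⟩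
    rintro ρ' ⟨⟨z', a', hv', rfl⟩, hc⟩
    exact certOf_eq_of_consistent f hv hv' hc

lemma mem_pair_false {o : Option Bool} (h : o ∉ ({some true, none} : Set (Option Bool))) :
    o = some false := by
  rcases o with _ | b
  · simp at h
  · rcases b with _ | _
    · rfl
    · simp at h

lemma mem_pair_true {o : Option Bool} (h : o ∉ ({some false, none} : Set (Option Bool))) :
    o = some true := by
  rcases o with _ | b
  · simp at h
  · rcases b with _ | _
    · simp at h
    · rfl

/-- Core lower bound: any `0`-certificate bound `K` for `G f` is at least
`min (Cx f {1,*} x) (Cx f {0,*} x)`. -/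
lemma C0_lower {x : Fin n → Bool} (hn : 2 ≤ n) (hL : 0 < L) (hx : f x = none)
    (hnL : n ≤ 2 ^ L) (hcc : ∀ b : Bool, CC f {some b} ≤ c)
    {K : ℕ}
    (hK : K ∈ {k | ∀ z : II n L c → Bool, totalize (G f) z ∈ ({some false} : Set (Option Bool)) →
      ∃ ρ, IsCert (totalize (G f)) {some false} ρ z ∧ psize ρ ≤ k})
    (hlt : K < min (Cx f {some true, none} x) (Cx f {some false, none} x)) : False := by
  classical
  have hn0 : 0 < n := by omega
  haveI : Nonempty (II n L c) := ⟨Sum.inl (⟨0, hL⟩, ⟨0, hn0⟩)⟩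
  -- the hard 0-input
  set z0 : II n L c → Bool :=
    (fun w => match w with
      | Sum.inl ij => x ij.2
      | Sum.inr _ => false) with hz0
  have hyy0 : ∀ i, yy z0 i = x := by intro i; funext j; rfl
  have hGz0 : G f z0 = false := by
    rw [← Bool.not_eq_true, G_eq_true_iff]
    rintro ⟨a, hv⟩
    have i0 : Fin L := ⟨0, hL⟩
    have := (hv i0).1 _ (hv i0).2
    rw [hyy0 i0] at this
    rw [hx] at this
    cases this
  obtain ⟨ρ, ⟨hρc, hρcert⟩, hρs⟩ := hK z0 (by simp [totalize, hGz0])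
  -- restrictions to the copies
  set ρi : Fin L → Fin n → Option Bool := fun i j => ρ (Sum.inl (i, j)) with hρi
  have hρic : ∀ i, Consistent (ρi i) x := by
    intro i j b hb
    exact hρc (Sum.inl (i, j)) b hb
  have hρis : ∀ i, psize (ρi i) ≤ psize ρ := by
    intro i
    unfold psize
    apply Finset.card_le_card_of_injOn (fun j => (Sum.inl (i, j) : II n L c))
    · intro j hj
      simp only [Finset.coe_filter, Finset.mem_filter, Finset.mem_univ, true_and, Set.mem_setOf_eq] at hj ⊢
      exact hj
    · intro j _ j' _ h
      simpa using h
  -- per copy, both a 0-input and a 1-input consistent with the restriction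
  have hget : ∀ (S : Set (Option Bool)), x ∈ {y | f y ∈ S} → Cx f S x > K →
      ∀ i, ∃ w, Consistent (ρi i) w ∧ f w ∉ S := by
    intro S hxS hCx i
    have hnc : ¬ IsCert f S (ρi i) x := by
      apply CheatSheet.not_isCert_of_psize_lt
      calc psize (ρi i) ≤ psize ρ := hρis i
        _ ≤ K := hρs
        _ < Cx f S x := hCx
    by_contra hno
    push_neg at hno
    exact hnc ⟨hρic i, fun x' hx' => by
      by_contra hmem
      exact hmem (hno x' hx')⟩
  have h0 : ∀ i, ∃ w, Consistent (ρi i) w ∧ f w = some false := by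
    intro i
    obtain ⟨w, hwc, hwm⟩ := hget {some true, none} (by simp [hx]) (by omega) i
    exact ⟨w, hwc, mem_pair_false hwm⟩
  have h1 : ∀ i, ∃ w, Consistent (ρi i) w ∧ f w = some true := by
    intro i
    obtain ⟨w, hwc, hwm⟩ := hget {some false, none} (by simp [hx]) (by omega) i
    exact ⟨w, hwc, mem_pair_true hwm⟩
  choose w0 hw0c hw0f using h0
  choose w1 hw1c hw1f using h1
  -- an untouched cell
  have hktop : K < n := by
    have : Cx f {some true, none} x ≤ Fintype.card (Fin n) :=
      CheatSheet.Cx_le_card (by simp [hx])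
    simp only [Fintype.card_fin] at this
    omega
  have huntouched : ∃ a : Fin L → Bool, ∀ q : CellC L c, q.1 = a → ρ (Sum.inr q) = none := by
    set TA : Finset (Fin L → Bool) := (Finset.univ.filter fun w => (ρ w).isSome).image
      (fun w => match w with
        | Sum.inr q => q.1
        | Sum.inl _ => (fun _ => false)) with hTA
    have hTAcard : TA.card < 2 ^ L := by
      calc TA.card ≤ psize ρ := Finset.card_image_le
        _ ≤ K := hρs
        _ < n := hktop
        _ ≤ 2 ^ L := hnL
    have : ∃ a : Fin L → Bool, a ∉ TA := by
      by_contra hall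
      push_neg at hall
      have : (Finset.univ : Finset (Fin L → Bool)) ⊆ TA := fun a _ => hall a
      have := Finset.card_le_card this
      simp only [Finset.card_univ, Fintype.card_fun, Fintype.card_bool, Fintype.card_fin] at this
      omega
    obtain ⟨a, ha⟩ := this
    refine ⟨a, fun q hq => ?_⟩
    by_contra hne
    have hsome : (ρ (Sum.inr q)).isSome := Option.ne_none_iff_isSome.mp hne
    apply ha
    have hmem : (Sum.inr q : II n L c) ∈ Finset.univ.filter (fun w => (ρ w).isSome) :=
      Finset.mem_filter.mpr ⟨Finset.mem_univ _, hsome⟩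
    have h2 : q.1 ∈ TA := by
      rw [hTA]
      exact Finset.mem_image_of_mem
        (f := fun w : II n L c => match w with
          | Sum.inr q => q.1
          | Sum.inl _ => (fun _ => false)) hmem
    rw [← hq]
    exact h2
  obtain ⟨a, hcell⟩ := huntouched
  -- the target values per copy and their certificates
  set W : Fin L → Fin n → Bool := fun i => if a i then w1 i else w0 i with hW
  have hWf : ∀ i, f (W i) = some (a i) := by
    intro i; by_cases h : a i <;> simp [hW, h, hw1f i, hw0f i]
  have hWc : ∀ i, Consistent (ρi i) (W i) := by
    intro i; by_cases h : a i
    · simpa [hW, h] using hw1c i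
    · simpa [hW, h] using hw0c i
  have hσ : ∀ i, ∃ σ, IsCert f {some (a i)} σ (W i) ∧ psize σ ≤ c := by
    intro i
    obtain ⟨σ, hσ1, hσ2⟩ := CheatSheet.exists_cert_CC f {some (a i)} (W i)
      (by rw [hWf i]; exact rfl)
    exact ⟨σ, hσ1, hσ2.trans (hcc (a i))⟩
  choose σf hσf hσfs using hσ
  set dom : Fin L → Finset (Fin n) := fun i => Finset.univ.filter fun j => (σf i j).isSome
    with hdom
  have hdomc : ∀ i, (dom i).card ≤ c := fun i => hσfs i
  set E : Fin L → Fin c → Fin n := fun i p =>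
    if h : (p : ℕ) < (dom i).card then (((dom i).orderIsoOfFin rfl) ⟨(p : ℕ), h⟩ : Fin n)
    else ⟨0, hn0⟩ with hE
  have hEcov : ∀ i, ∀ j ∈ dom i, ∃ p : Fin c, E i p = j := by
    intro i j hj
    set r := ((dom i).orderIsoOfFin rfl).symm ⟨j, hj⟩ with hr
    refine ⟨⟨(r : ℕ), lt_of_lt_of_le r.isLt (hdomc i)⟩, ?_⟩
    have hplt : ((⟨(r : ℕ), lt_of_lt_of_le r.isLt (hdomc i)⟩ : Fin c) : ℕ) < (dom i).card :=
      r.isLt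
    simp only [hE]
    rw [dif_pos hplt]
    have heq : (⟨((⟨(r : ℕ), lt_of_lt_of_le r.isLt (hdomc i)⟩ : Fin c) : ℕ), hplt⟩ :
        Fin (dom i).card) = r := Fin.ext rfl
    rw [heq, hr]
    simp
  set base : II n L c → Bool := fun w =>
    match w with
    | Sum.inl ij => W ij.1 ij.2
    | Sum.inr (a', i, p, t) =>
        if a' = a then
          (match t with
           | some tt => finTwoEquiv ((finFunctionFinEquiv.symm (Fin.castLE hnL (E i p))) tt)
           | none => W i (E i p))
        else false
    with hbase
  set z1 : II n L c → Bool := fun w => (ρ w).getD (base w) with hz1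
  have hcons1 : Consistent ρ z1 := by
    intro w b hb; simp [hz1, hb]
  have hz1cell : ∀ q : CellC L c, q.1 = a → z1 (Sum.inr q) = base (Sum.inr q) := by
    intro q hq; simp [hz1, hcell q hq]
  have hyy1 : ∀ i, yy z1 i = W i := by
    intro i; funext j
    show z1 (Sum.inl (i, j)) = W i j
    rcases hρv : ρ (Sum.inl (i, j)) with _ | b
    · simp [hz1, hρv, hbase]
    · have hWij := hWc i j b hρv
      simp [hz1, hρv, hWij]
  have hidx1 : ∀ i p, idxF z1 a i p = Fin.castLE hnL (E i p) := by
    intro i p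
    unfold idxF
    have hb : ∀ t, z1 (Sum.inr (a, i, p, some t)) =
        finTwoEquiv ((finFunctionFinEquiv.symm (Fin.castLE hnL (E i p))) t) := by
      intro t
      rw [hz1cell (a, i, p, some t) rfl]
      simp [hbase]
    simp only [hb]
    simp
  have hval1 : ∀ i p, valF z1 a i p = W i (E i p) := by
    intro i p
    unfold valF
    rw [hz1cell (a, i, p, none) rfl]
    simp [hbase]
  have hsig1 : ∀ i j b, sig z1 a i j = some b → b = W i j := by
    intro i j b hb
    unfold sig at hb
    split_ifs at hb with h
    · have hbv := Option.some.inj hb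
      set p0 := (PP z1 a i j).min' h with hp0
      have hpm : p0 ∈ PP z1 a i j := Finset.min'_mem _ h
      have hidx : (idxF z1 a i p0 : ℕ) = (j : ℕ) := by simpa [PP] using hpm
      rw [hidx1 i p0] at hidx
      have hE0 : E i p0 = j := Fin.ext (by simpa using hidx)
      rw [← hbv, hval1 i p0, hE0]
  have hsig2 : ∀ i j, (σf i j).isSome → (sig z1 a i j).isSome := by
    intro i j hj
    have hjd : j ∈ dom i := by simp [hdom, hj]
    obtain ⟨p, hp⟩ := hEcov i j hjd
    apply isSome_sig_iff.mpr
    refine ⟨p, ?_⟩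
    simp [PP, hidx1 i p, hp]
  have hvalid : ValidAt f z1 a := by
    intro i
    constructor
    · intro x' hx'
      have hcσ : Consistent (σf i) x' := by
        intro j b hb
        have hj : (σf i j).isSome := by simp [hb]
        obtain ⟨b', hb'⟩ := Option.isSome_iff_exists.mp (hsig2 i j hj)
        have hbW : b' = W i j := hsig1 i j b' hb'
        have hWb : W i j = b := (hσf i).1 j b hb
        rw [hx' j b' hb', hbW, hWb]
      have := (hσf i).2 x' hcσ
      simpa using this
    · intro j b hb
      show yy z1 i j = b
      rw [hyy1 i]
      exact (hsig1 i j b hb).symm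
  have hG1 : G f z1 = true := (G_eq_true_iff f z1).mpr ⟨a, hvalid⟩
  have hmem := hρcert z1 hcons1
  rw [Set.mem_singleton_iff] at hmem
  simp [totalize, hG1] at hmem


end CS


/-- Construction Puzzle 2 ⇒ Puzzle 1 (cheat sheets): from a partial
function `f` on `n ≥ 2` bits and a `*`-input `x`, one gets a total function `g` on
`m ≤ 3·n²·⌈log₂ n⌉²` bits with `C₀(g) ≥ min{C_{0̄}(f,x), C_{1̄}(f,x)}` and
`UC₁(g) ≤ 3·C(f)·⌈log₂ n⌉²`. -/
theorem puzzle2_to_puzzle1 (n : ℕ) (hn : 2 ≤ n)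
    (f : (Fin n → Bool) → Option Bool) (x : Fin n → Bool) (hx : f x = none) :
    ∃ m : ℕ, m ≤ 3 * n ^ 2 * (Nat.clog 2 n) ^ 2 ∧
      ∃ g : (Fin m → Bool) → Bool,
        min (Cx f {some true, none} x) (Cx f {some false, none} x) ≤ C0 g ∧
        UC1 g ≤ 3 * Cmax f * (Nat.clog 2 n) ^ 2 := by
  classical
  set L := Nat.clog 2 n with hLdef
  set c := Cmax f with hcdef
  have hL : 0 < L := Nat.clog_pos (by norm_num) hn
  have hn0 : 0 < n := by omega
  have hnL : n ≤ 2 ^ L := Nat.le_pow_clog (by norm_num) n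
  have hpred : 2 ^ (L - 1) < n := Nat.pow_pred_clog_lt_self (by norm_num) (by omega)
  have hsub : 2 ^ L + 2 ≤ 2 * n := by
    have h2 : 2 ^ L = 2 * 2 ^ (L - 1) := by
      conv_lhs => rw [show L = (L - 1) + 1 by omega]
      rw [pow_succ]
      ring
    omega
  have hcn : c ≤ n := by
    have := CheatSheet.Cmax_le_card f
    simpa using this
  have hcc : ∀ b : Bool, CC f {some b} ≤ c := by
    intro b
    cases b
    · exact le_max_left _ _
    · exact le_max_right _ _
  haveI : Nonempty (CS.II n L c) := ⟨Sum.inl (⟨0, hL⟩, ⟨0, hn0⟩)⟩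
  set m := Fintype.card (CS.II n L c) with hmdef
  have hm : m = L * n + 2 ^ L * (L * (c * (L + 1))) := by
    rw [hmdef]
    show Fintype.card ((Fin L × Fin n) ⊕ ((Fin L → Bool) × Fin L × Fin c × Option (Fin L))) = _
    rw [Fintype.card_sum, Fintype.card_prod, Fintype.card_prod, Fintype.card_prod,
      Fintype.card_prod, Fintype.card_fun, Fintype.card_option]
    simp
  set e := Fintype.equivFin (CS.II n L c) with hedef
  refine ⟨m, ?_, fun y : Fin m → Bool => CS.G f (fun w => y (e w)), ?_, ?_⟩
  · -- size bound
    rcases (show L = 1 ∨ 2 ≤ L by omega) with hL1 | hL2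
    · have hn2 : n = 2 := by
        have h := hnL
        rw [hL1] at h
        omega
      rw [hm, hL1, hn2]
      have hc2 : c ≤ 2 := by omega
      norm_num
      omega
    · rw [hm]
      have e1 : 2^L*(L*(c*(L+1))) ≤ 2^L*(L*(n*(L+1))) :=
        Nat.mul_le_mul_left _ (Nat.mul_le_mul_left _ (Nat.mul_le_mul_right _ hcn))
      have e2 : (2^L+2)*(L*(n*(L+1))) ≤ (2*n)*(L*(n*(L+1))) :=
        Nat.mul_le_mul_right _ hsub
      have e3 : 2*(n^2*L) ≤ L*(n^2*L) := Nat.mul_le_mul_right _ hL2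
      calc L * n + 2^L*(L*(c*(L+1))) ≤ L*n + 2^L*(L*(n*(L+1))) :=
            Nat.add_le_add_left e1 (L*n)
        _ ≤ 3*n^2*L^2 := by nlinarith [e2, e3]
  · -- C0 lower bound
    unfold C0 CC
    apply le_csInf
    · exact ⟨Fintype.card (Fin m), CheatSheet.card_mem_CCset _ _⟩
    · intro K hK
      by_contra hlt
      push_neg at hlt
      exact CS.C0_lower f hn hL hx hnL hcc (C0set_mem_transport e (CS.G f) hK) hlt
  · -- UC1 upper bound
    have hmem := UC1set_mem_transport e (CS.G f) (CS.UC1_mem f hn0)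
    have h1 : UC1 (fun y : Fin m → Bool => CS.G f (fun w => y (e w))) ≤
        L * c + L * (c * (L + 1)) := Nat.sInf_le hmem
    calc UC1 _ ≤ L * c + L * (c * (L + 1)) := h1
      _ ≤ 3 * c * L ^ 2 := by nlinarith [hL]
end

section
/- Construction Puzzle 1 ⇒ Puzzle 2: for every total boolean function f : {0,1}^n → {0,1} with f⁻¹(0) nonempty, there exists a partial boolean function g : {0,1}^{2n} → {0,1,*} and an input z with g(z) = * such that min{C_{0̄}(g, z), C_{1̄}(g, z)} ≥ C₀(f) and C(g) ≤ 2·UC₁(f). -/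
open Finset in
lemma card_filter_equiv' {α β : Type} [Fintype α] [Fintype β]
    (e : α ≃ β) (p : β → Prop) [DecidablePred p] :
    (univ.filter p).card = (univ.filter (fun a => p (e a))).card := by
  apply Finset.card_bij (i := fun b _ => e.symm b)
  · intro b hb
    simp only [mem_filter, mem_univ, true_and] at *
    simpa using hb
  · intro a ha b hb h
    exact e.symm.injective h
  · intro a ha
    exact ⟨e a, by simpa using (mem_filter.mp ha).2, by simp⟩

open Finset in
lemma card_filter_sum {α β : Type} [Fintype α] [Fintype β]
    (p : α ⊕ β → Prop) [DecidablePred p] :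
    (univ.filter p).card =
      (univ.filter (fun a => p (Sum.inl a))).card +
      (univ.filter (fun b => p (Sum.inr b))).card := by
  have h1 : (univ.filter p).toLeft = univ.filter (fun a => p (Sum.inl a)) := by ext a; simp
  have h2 : (univ.filter p).toRight = univ.filter (fun b => p (Sum.inr b)) := by ext b; simp
  rw [← Finset.card_toLeft_add_card_toRight, h1, h2]

def e2 (n : ℕ) : (Fin n ⊕ Fin n) ≃ Fin (2 * n) :=
  finSumFinEquiv.trans (finCongr (two_mul n).symm)

def lo (n : ℕ) (i : Fin n) : Fin (2 * n) := e2 n (Sum.inl i)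
def hi (n : ℕ) (i : Fin n) : Fin (2 * n) := e2 n (Sum.inr i)

@[simp] lemma e2_symm_lo {n : ℕ} (i : Fin n) : (e2 n).symm (lo n i) = Sum.inl i :=
  (e2 n).symm_apply_apply _

@[simp] lemma e2_symm_hi {n : ℕ} (i : Fin n) : (e2 n).symm (hi n i) = Sum.inr i :=
  (e2 n).symm_apply_apply _

def Xp {n : ℕ} (u : Fin (2 * n) → Bool) : Fin n → Bool := fun i => u (lo n i)
def Yp {n : ℕ} (u : Fin (2 * n) → Bool) : Fin n → Bool := fun i => u (hi n i)
def wp {n : ℕ} (u : Fin (2 * n) → Bool) : Fin n → Bool := fun i => xor (Xp u i) (Yp u i)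

def Tset {n : ℕ} (ρ : Fin n → Option Bool) : Finset (Fin n) :=
  Finset.univ.filter fun i => (ρ i).isSome

lemma Tset_card {n : ℕ} (ρ : Fin n → Option Bool) : (Tset ρ).card = psize ρ := rfl

noncomputable def parZ {n : ℕ} (x : Fin n → Bool) (T : Finset (Fin n)) : ZMod 2 :=
  ∑ i ∈ T, if x i then 1 else 0

lemma parZ_congr {n : ℕ} {x y : Fin n → Bool} {T : Finset (Fin n)}
    (h : ∀ i ∈ T, x i = y i) : parZ x T = parZ y T :=
  Finset.sum_congr rfl fun i hi => by rw [h i hi]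

lemma parZ_flip {n : ℕ} {x y : Fin n → Bool} {T : Finset (Fin n)} {t : Fin n}
    (ht : t ∈ T) (hagree : ∀ i ∈ T, i ≠ t → x i = y i) (hflip : y t = ! x t) :
    parZ y T = parZ x T + 1 := by
  unfold parZ
  rw [← Finset.add_sum_erase _ _ ht, ← Finset.add_sum_erase _ _ ht]
  have h1 : ∑ i ∈ T.erase t, (if y i then (1 : ZMod 2) else 0)
      = ∑ i ∈ T.erase t, (if x i then (1 : ZMod 2) else 0) := by
    apply Finset.sum_congr rfl
    intro i hi
    rw [hagree i (Finset.mem_of_mem_erase hi) (Finset.ne_of_mem_erase hi)]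
  rw [h1, hflip]
  generalize (∑ i ∈ T.erase t, (if x i then (1 : ZMod 2) else 0)) = s
  cases hx : x t <;> revert s <;> decide

open Finset in
lemma psize_split {n : ℕ} (ρ : Fin (2 * n) → Option Bool) :
    psize ρ = (univ.filter (fun i : Fin n => (ρ (lo n i)).isSome)).card +
      (univ.filter (fun i : Fin n => (ρ (hi n i)).isSome)).card := by
  unfold psize
  rw [card_filter_equiv' (e2 n) (fun j => (ρ j).isSome = true)]
  exact card_filter_sum _

noncomputable def gdef {n : ℕ} (f : (Fin n → Bool) → Bool)
    (R : (Fin n → Bool) → (Fin n → Option Bool)) : (Fin (2 * n) → Bool) → Option Bool :=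
  fun u => if f (wp u) = true then some (decide (parZ (Xp u) (Tset (R (wp u))) = 1)) else none

def mkρ {n : ℕ} (u : Fin (2 * n) → Bool) (T : Finset (Fin n)) : Fin (2 * n) → Option Bool :=
  fun j => Sum.elim (fun i => if i ∈ T then some (u (lo n i)) else none)
    (fun i => if i ∈ T then some (u (hi n i)) else none) ((e2 n).symm j)

@[simp] lemma mkρ_lo {n : ℕ} (u : Fin (2 * n) → Bool) (T : Finset (Fin n)) (i : Fin n) :
    mkρ u T (lo n i) = if i ∈ T then some (u (lo n i)) else none := by
  unfold mkρ; rw [e2_symm_lo]; rfl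

@[simp] lemma mkρ_hi {n : ℕ} (u : Fin (2 * n) → Bool) (T : Finset (Fin n)) (i : Fin n) :
    mkρ u T (hi n i) = if i ∈ T then some (u (hi n i)) else none := by
  unfold mkρ; rw [e2_symm_hi]; rfl

lemma consistent_mkρ {n : ℕ} (u : Fin (2 * n) → Bool) (T : Finset (Fin n)) :
    Consistent (mkρ u T) u := by
  intro j b hb
  obtain ⟨s, rfl⟩ : ∃ s, j = e2 n s := ⟨(e2 n).symm j, ((e2 n).apply_symm_apply j).symm⟩
  cases s with
  | inl i =>
    rw [show e2 n (Sum.inl i) = lo n i from rfl] at hb ⊢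
    rw [mkρ_lo] at hb
    by_cases h : i ∈ T
    · rw [if_pos h] at hb; exact Option.some_inj.mp hb
    · rw [if_neg h] at hb; cases hb
  | inr i =>
    rw [show e2 n (Sum.inr i) = hi n i from rfl] at hb ⊢
    rw [mkρ_hi] at hb
    by_cases h : i ∈ T
    · rw [if_pos h] at hb; exact Option.some_inj.mp hb
    · rw [if_neg h] at hb; cases hb

open Finset in
lemma psize_mkρ {n : ℕ} (u : Fin (2 * n) → Bool) (T : Finset (Fin n)) :
    psize (mkρ u T) = 2 * T.card := by
  rw [psize_split]
  have h1 : (univ.filter (fun i : Fin n => (mkρ u T (lo n i)).isSome)) = T := by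
    ext i
    simp only [mem_filter, mem_univ, true_and, mkρ_lo]
    by_cases h : i ∈ T <;> simp [h]
  have h2 : (univ.filter (fun i : Fin n => (mkρ u T (hi n i)).isSome)) = T := by
    ext i
    simp only [mem_filter, mem_univ, true_and, mkρ_hi]
    by_cases h : i ∈ T <;> simp [h]
  rw [h1, h2]; ring

theorem aux (n : ℕ) (f : (Fin n → Bool) → Bool) (c k : ℕ)
    (U : Set (Fin n → Option Bool))
    (hU1 : ∀ ρ ∈ U, psize ρ ≤ k ∧ ∀ x, Consistent ρ x → f x = true)
    (hU2 : ∀ x, f x = true → ∃! ρ, ρ ∈ U ∧ Consistent ρ x)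
    (x₀ : Fin n → Bool) (hx₀ : f x₀ = false)
    (hc : ∀ ρ : Fin n → Option Bool, Consistent ρ x₀ →
      (∀ x', Consistent ρ x' → f x' = false) → c ≤ psize ρ) :
    ∃ g : (Fin (2 * n) → Bool) → Option Bool, ∃ z : Fin (2 * n) → Bool,
      g z = none ∧
      c ≤ min (Cx g {some true, none} z) (Cx g {some false, none} z) ∧
      Cmax g ≤ 2 * k := by
  classical
  set R : (Fin n → Bool) → (Fin n → Option Bool) :=
    fun v => if h : f v = true then (hU2 v h).choose else (fun _ => none) with hRdef
  have hR1 : ∀ v, f v = true → R v ∈ U ∧ Consistent (R v) v := by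
    intro v h
    rw [hRdef]
    simp only [dif_pos h]
    exact (hU2 v h).choose_spec.1
  have hRuniq : ∀ (v : Fin n → Bool) (h : f v = true) (ρ' : Fin n → Option Bool),
      ρ' ∈ U → Consistent ρ' v → ρ' = R v := by
    intro v h ρ' h1 h2
    rw [hRdef]
    simp only [dif_pos h]
    exact (hU2 v h).choose_spec.2 ρ' ⟨h1, h2⟩
  set g := gdef f R with hgdef
  set z : Fin (2 * n) → Bool := fun j => Sum.elim x₀ (fun _ => false) ((e2 n).symm j) with hzdef
  have hzlo : ∀ i, z (lo n i) = x₀ i := by intro i; rw [hzdef]; simp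
  have hzhi : ∀ i, z (hi n i) = false := by intro i; rw [hzdef]; simp
  have hwz : wp z = x₀ := by
    funext i
    unfold wp Xp Yp
    rw [hzlo, hzhi, Bool.xor_false]
  have hgz : g z = none := by
    rw [hgdef]
    unfold gdef
    rw [hwz, hx₀]
    simp
  -- upper bound: certificates for defined inputs
  have hcert : ∀ u : Fin (2 * n) → Bool, f (wp u) = true →
      Consistent (mkρ u (Tset (R (wp u)))) u ∧
      (∀ u', Consistent (mkρ u (Tset (R (wp u)))) u' → g u' = g u) ∧
      psize (mkρ u (Tset (R (wp u)))) ≤ 2 * k := by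
    intro u hfu
    set T := Tset (R (wp u)) with hT
    have hmem := hR1 (wp u) hfu
    refine ⟨consistent_mkρ u T, ?_, ?_⟩
    · intro u' hcons
      have hagX : ∀ i ∈ T, Xp u' i = Xp u i := by
        intro i hiT
        have := hcons (lo n i) (u (lo n i)) (by rw [mkρ_lo, if_pos hiT])
        exact this
      have hagY : ∀ i ∈ T, Yp u' i = Yp u i := by
        intro i hiT
        have := hcons (hi n i) (u (hi n i)) (by rw [mkρ_hi, if_pos hiT])
        exact this
      have hagw : ∀ i ∈ T, wp u' i = wp u i := by
        intro i hiT
        unfold wp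
        rw [hagX i hiT, hagY i hiT]
      have hconsR : Consistent (R (wp u)) (wp u') := by
        intro i b hb
        have hiT : i ∈ T := by
          rw [hT]
          unfold Tset
          simp only [Finset.mem_filter, Finset.mem_univ, true_and, hb]
          rfl
        rw [hagw i hiT]
        exact hmem.2 i b hb
      have hfu' : f (wp u') = true := (hU1 _ hmem.1).2 _ hconsR
      have hRu' : R (wp u') = R (wp u) :=
        (hRuniq (wp u') hfu' _ hmem.1 hconsR).symm
      rw [hgdef]
      unfold gdef
      rw [if_pos hfu', if_pos hfu, hRu', ← hT]
      rw [parZ_congr hagX]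
    · rw [psize_mkρ, Tset_card]
      have := (hU1 _ hmem.1).1
      omega
  have hCC : ∀ b : Bool, CC g {some b} ≤ 2 * k := by
    intro b
    apply Nat.sInf_le
    intro u hu
    have hu' : g u = some b := hu
    have hf : f (wp u) = true := by
      by_contra hf
      rw [hgdef] at hu'
      unfold gdef at hu'
      rw [if_neg hf] at hu'
      cases hu'
    obtain ⟨h1, h2, h3⟩ := hcert u hf
    refine ⟨_, ⟨h1, fun u' hcu' => ?_⟩, h3⟩
    rw [h2 u' hcu', hu']
    rfl
  -- main combinatorial lemma
  have main : ∀ ρ : Fin (2 * n) → Option Bool, Consistent ρ z → psize ρ < c →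
      ∃ u₀ u₁, Consistent ρ u₀ ∧ g u₀ = some false ∧ Consistent ρ u₁ ∧ g u₁ = some true := by
    intro ρ hcons hsize
    set σ : Fin n → Option Bool :=
      fun i => if (ρ (lo n i)).isSome ∨ (ρ (hi n i)).isSome then some (x₀ i) else none with hσ
    have hσcons : Consistent σ x₀ := by
      intro i b hb
      simp only [hσ] at hb
      by_cases h : (ρ (lo n i)).isSome ∨ (ρ (hi n i)).isSome
      · rw [if_pos h] at hb; exact Option.some_inj.mp hb
      · rw [if_neg h] at hb; cases hb
    have hσsize : psize σ ≤ psize ρ := by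
      rw [psize_split ρ]
      unfold psize
      calc (Finset.univ.filter fun i => (σ i).isSome).card
          ≤ ((Finset.univ.filter fun i : Fin n => (ρ (lo n i)).isSome) ∪
             (Finset.univ.filter fun i : Fin n => (ρ (hi n i)).isSome)).card := by
            apply Finset.card_le_card
            intro i hii
            simp only [Finset.mem_filter, Finset.mem_univ, true_and, Finset.mem_union] at hii ⊢
            simp only [hσ] at hii
            by_cases h : (ρ (lo n i)).isSome ∨ (ρ (hi n i)).isSome
            · exact h
            · rw [if_neg h] at hii; cases hii
        _ ≤ _ := Finset.card_union_le _ _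
    have hex : ¬ (∀ x', Consistent σ x' → f x' = false) := by
      intro hall
      have := hc σ hσcons hall
      omega
    push_neg at hex
    obtain ⟨w', hw'cons, hw'⟩ := hex
    have hfw' : f w' = true := by
      revert hw'
      cases f w' <;> simp
    have hwx : ∀ i, (ρ (lo n i)).isSome ∨ (ρ (hi n i)).isSome → w' i = x₀ i := by
      intro i h
      exact hw'cons i (x₀ i) (by simp only [hσ]; rw [if_pos h])
    have hzloc : ∀ i b, ρ (lo n i) = some b → x₀ i = b := by
      intro i b h
      have := hcons (lo n i) b h
      rwa [hzlo] at this
    have hzhic : ∀ i b, ρ (hi n i) = some b → b = false := by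
      intro i b h
      have := hcons (hi n i) b h
      rw [hzhi] at this
      exact this.symm
    obtain ⟨t, htT, htlo, hthi⟩ :
        ∃ t ∈ Tset (R w'), ρ (lo n t) = none ∧ ρ (hi n t) = none := by
      by_contra hno
      push_neg at hno
      have hconsx₀ : Consistent (R w') x₀ := by
        intro i b hb
        have hiT : i ∈ Tset (R w') := by
          unfold Tset
          simp only [Finset.mem_filter, Finset.mem_univ, true_and, hb]
          rfl
        have hsome : (ρ (lo n i)).isSome ∨ (ρ (hi n i)).isSome := by
          by_cases hl : ρ (lo n i) = none
          · right; exact Option.ne_none_iff_isSome.mp (hno i hiT hl)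
          · left; exact Option.ne_none_iff_isSome.mp hl
        have h1 : w' i = x₀ i := hwx i hsome
        have h2 : w' i = b := (hR1 w' hfw').2 i b hb
        rw [← h1, h2]
      have := (hU1 _ (hR1 w' hfw').1).2 x₀ hconsx₀
      rw [hx₀] at this
      cases this
    have build : ∀ cbit : Bool, ∃ u, Consistent ρ u ∧
        g u = some (decide (parZ (fun i => if i = t then cbit else w' i) (Tset (R w')) = 1)) := by
      intro cbit
      set xp : Fin n → Bool := fun i => if i = t then cbit else w' i with hxp
      set yp : Fin n → Bool := fun i => if i = t then xor cbit (w' t) else false with hyp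
      set u : Fin (2 * n) → Bool := fun j => Sum.elim xp yp ((e2 n).symm j) with hu
      have hXu : Xp u = xp := by
        funext i
        unfold Xp
        rw [hu]
        simp [lo]
      have hYu : Yp u = yp := by
        funext i
        unfold Yp
        rw [hu]
        simp [hi]
      have hwu : wp u = w' := by
        funext i
        unfold wp
        rw [hXu, hYu, hxp, hyp]
        by_cases h : i = t
        · subst h
          simp only [if_pos rfl]
          cases cbit <;> cases hwt : w' i <;> rfl
        · simp only [if_neg h, Bool.xor_false]
      have hconsu : Consistent ρ u := by
        intro j b hb
        obtain ⟨s, rfl⟩ : ∃ s, j = e2 n s := ⟨(e2 n).symm j, ((e2 n).apply_symm_apply j).symm⟩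
        cases s with
        | inl i =>
          have hbi : ρ (lo n i) = some b := hb
          have hne : i ≠ t := by
            rintro rfl
            rw [htlo] at hbi
            cases hbi
          have h1 : x₀ i = b := hzloc i b hbi
          have h2 : w' i = x₀ i := hwx i (Or.inl (by rw [hbi]; rfl))
          show u (lo n i) = b
          rw [hu]
          simp only [lo, Equiv.symm_apply_apply, Sum.elim_inl]
          rw [hxp]
          simp only [if_neg hne]
          rw [h2, h1]
        | inr i =>
          have hbi : ρ (hi n i) = some b := hb
          have hne : i ≠ t := by
            rintro rfl
            rw [hthi] at hbi
            cases hbi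
          have h1 : b = false := hzhic i b hbi
          show u (hi n i) = b
          rw [hu]
          simp only [hi, Equiv.symm_apply_apply, Sum.elim_inr]
          rw [hyp]
          simp only [if_neg hne]
          rw [h1]
      refine ⟨u, hconsu, ?_⟩
      rw [hgdef]
      unfold gdef
      rw [hwu, if_pos hfw', hXu]
    obtain ⟨u₁, hcons1, hg1⟩ := build (w' t)
    obtain ⟨u₂, hcons2, hg2⟩ := build (!(w' t))
    have hxp1 : (fun i => if i = t then w' t else w' i) = w' := by
      funext i
      by_cases h : i = t
      · rw [if_pos h, h]
      · rw [if_neg h]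
    set p := parZ w' (Tset (R w')) with hp
    have hg1' : g u₁ = some (decide (p = 1)) := by rw [hg1, hxp1]
    have hflip : parZ (fun i => if i = t then !(w' t) else w' i) (Tset (R w')) = p + 1 := by
      rw [hp]
      apply parZ_flip htT
      · intro i _ hne
        rw [if_neg hne]
      · rw [if_pos rfl]
    have hg2' : g u₂ = some (decide (p + 1 = 1)) := by rw [hg2, hflip]
    have hiff : ∀ q : ZMod 2, (decide (q + 1 = 1) = !decide (q = 1)) := by decide
    by_cases hpv : p = 1
    · refine ⟨u₂, u₁, hcons2, ?_, hcons1, ?_⟩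
      · rw [hg2', hiff p]
        simp [hpv]
      · rw [hg1']
        simp [hpv]
    · refine ⟨u₁, u₂, hcons1, ?_, hcons2, ?_⟩
      · rw [hg1']
        simp [hpv]
      · rw [hg2', hiff p]
        simp [hpv]
  -- lower bound from main lemma
  have lower : ∀ (S : Set (Option Bool)) (b : Bool), none ∈ S → some b ∉ S →
      c ≤ Cx g S z := by
    intro S b hnone hb
    apply le_csInf
    · refine ⟨psize (fun j => some (z j)), fun j => some (z j),
        ⟨fun j bb h => Option.some_inj.mp h, fun u' hcons' => ?_⟩, le_refl _⟩
      have : u' = z := funext fun j => hcons' j (z j) rfl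
      rw [this, hgz]
      exact hnone
    · rintro m ⟨ρ, ⟨hconsz, hall⟩, hps⟩
      by_contra hlt
      push_neg at hlt
      obtain ⟨u₀, u₁, hc0, hg0, hc1, hg1⟩ := main ρ hconsz (by omega)
      cases b with
      | false =>
        have := hall u₀ hc0
        rw [hg0] at this
        exact hb this
      | true =>
        have := hall u₁ hc1
        rw [hg1] at this
        exact hb this
  refine ⟨g, z, hgz, le_min ?_ ?_, ?_⟩
  · exact lower _ false (by simp) (by simp)
  · exact lower _ true (by simp) (by simp)
  · exact max_le (hCC false) (hCC true)

/-- Construction Puzzle 1 ⇒ Puzzle 2: from a total function `f`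
on `n` bits with a 0-input, one gets a partial function `g` on `2n` bits and a
`*`-input `z` with `min{C_{0̄}(g,z), C_{1̄}(g,z)} ≥ C₀(f)` and `C(g) ≤ 2·UC₁(f)`. -/
theorem puzzle1_to_puzzle2 (n : ℕ) (f : (Fin n → Bool) → Bool)
    (h0 : ∃ x, f x = false) :
    ∃ g : (Fin (2 * n) → Bool) → Option Bool, ∃ z : Fin (2 * n) → Bool,
      g z = none ∧
      C0 f ≤ min (Cx g {some true, none} z) (Cx g {some false, none} z) ∧
      Cmax g ≤ 2 * UC1 f := by
  classical
  -- the defining set of UC1 is nonempty, so its infimum is attained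
  have hne : {k | ∃ U : Set ((Fin n) → Option Bool),
      (∀ ρ ∈ U, psize ρ ≤ k ∧ ∀ x, Consistent ρ x → f x = true) ∧
      ∀ x, f x = true → ∃! ρ, ρ ∈ U ∧ Consistent ρ x}.Nonempty := by
    refine ⟨n, {ρ | ∃ x, f x = true ∧ ρ = fun i => some (x i)}, ?_, ?_⟩
    · rintro ρ ⟨x, hx, rfl⟩
      constructor
      · unfold psize
        simp
      · intro y hy
        have : y = x := funext fun i => hy i (x i) rfl
        rw [this, hx]
    · intro x hx
      refine ⟨fun i => some (x i), ⟨⟨x, hx, rfl⟩, fun i b h => Option.some_inj.mp h⟩, ?_⟩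
      rintro ρ' ⟨⟨x', hx', rfl⟩, hcons⟩
      have : x = x' := funext fun i => hcons i (x' i) rfl
      rw [this]
  have hUC := Nat.sInf_mem hne
  obtain ⟨U, hU1, hU2⟩ := hUC
  -- a 0-input all of whose 0-certificates have size ≥ C0 f
  obtain ⟨x₀, hx₀, hcx⟩ : ∃ x₀, f x₀ = false ∧ ∀ ρ : Fin n → Option Bool,
      Consistent ρ x₀ → (∀ x', Consistent ρ x' → f x' = false) → C0 f ≤ psize ρ := by
    by_contra hcon
    push_neg at hcon
    obtain ⟨xa, hxa⟩ := h0
    obtain ⟨ρa, _, _, hlta⟩ := hcon xa hxa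
    have hpos : 1 ≤ C0 f := by omega
    have hmem : (C0 f - 1) ∈ {k | ∀ x, totalize f x ∈ ({some false} : Set (Option Bool)) →
        ∃ ρ, IsCert (totalize f) {some false} ρ x ∧ psize ρ ≤ k} := by
      intro x hx
      have hfx : f x = false := by simpa [totalize] using hx
      obtain ⟨ρ, h1, h2, h3⟩ := hcon x hfx
      refine ⟨ρ, ⟨h1, fun x' hx' => ?_⟩, by omega⟩
      simp [totalize, h2 x' hx']
    have hle : C0 f ≤ C0 f - 1 := Nat.sInf_le hmem
    omega
  exact aux n f (C0 f) (UC1 f) U hU1 hU2 x₀ hx₀ hcx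
end

section
/- Construction Puzzle 2 ⇒ Puzzle 3: for every partial boolean function f : {0,1}^n → {0,1,*} and every input x with f(x) = *, there exists an intersecting hypergraph G = (V, E) with |V| = 2n + 2 vertices, whose every edge has size at most C(f) + 1, together with a colouring c : V → {0,1}, such that every c-monochromatic hitting set of G has size at least min{C_{0̄}(f, x), C_{1̄}(f, x)}. -/
-- auxiliary
lemma exists_cert {ι : Type} [Fintype ι] (f : (ι → Bool) → Option Bool)
    (S : Set (Option Bool)) (y : ι → Bool) (hy : f y ∈ S) :
    ∃ ρ, IsCert f S ρ y ∧ psize ρ ≤ CC f S := by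
  have hmem : Fintype.card ι ∈ {k | ∀ z, f z ∈ S → ∃ ρ, IsCert f S ρ z ∧ psize ρ ≤ k} := by
    intro z hz
    refine ⟨fun i => some (z i), ⟨fun i b h => Option.some_injective _ h, ?_⟩, ?_⟩
    · intro x' hx'
      have : x' = z := funext fun i => hx' i (z i) rfl
      rwa [this]
    · calc psize (fun i => some (z i)) ≤ Finset.univ.card := Finset.card_filter_le _ _
        _ = Fintype.card ι := rfl
  have hCC : CC f S ∈ {k | ∀ z, f z ∈ S → ∃ ρ, IsCert f S ρ z ∧ psize ρ ≤ k} :=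
    Nat.sInf_mem ⟨_, hmem⟩
  exact hCC y hy

def enc (n : ℕ) (i : Fin n) (b : Bool) : Fin (2 * n + 2) :=
  ⟨2 * i.val + b.toNat, by have := i.isLt; cases b <;> simp <;> omega⟩

def sp (n : ℕ) (b : Bool) : Fin (2 * n + 2) :=
  ⟨2 * n + b.toNat, by cases b <;> simp <;> omega⟩

lemma enc_inj {n : ℕ} {i j : Fin n} {b c : Bool} (h : enc n i b = enc n j c) :
    i = j ∧ b = c := by
  have hv : 2 * i.val + b.toNat = 2 * j.val + c.toNat := congrArg Fin.val h
  cases b <;> cases c <;> simp only [Bool.toNat_false, Bool.toNat_true] at hv <;>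
    first
      | exact ⟨Fin.ext (by omega), rfl⟩
      | exact absurd hv (by omega)

lemma enc_ne_sp {n : ℕ} (i : Fin n) (b c : Bool) : enc n i b ≠ sp n c := by
  intro h
  have hv : 2 * i.val + b.toNat = 2 * n + c.toNat := congrArg Fin.val h
  have := i.isLt
  cases b <;> cases c <;> simp only [Bool.toNat_false, Bool.toNat_true] at hv <;> omega

lemma sp_inj {n : ℕ} {b c : Bool} (h : sp n b = sp n c) : b = c := by
  have hv : 2 * n + b.toNat = 2 * n + c.toNat := congrArg Fin.val h
  cases b <;> cases c <;> simp only [Bool.toNat_false, Bool.toNat_true] at hv <;>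
    first
      | rfl
      | exact absurd hv (by omega)

def col (n : ℕ) (x : Fin n → Bool) (v : Fin (2 * n + 2)) : Bool :=
  decide ((∃ i, v = enc n i (x i)) ∨ v = sp n true)

lemma col_sp_true (n : ℕ) (x : Fin n → Bool) : col n x (sp n true) = true := by
  simp [col]

lemma col_sp_false (n : ℕ) (x : Fin n → Bool) : col n x (sp n false) = false := by
  simp only [col, decide_eq_false_iff_not]
  rintro (⟨i, h⟩ | h)
  · exact enc_ne_sp i (x i) false h.symm
  · exact Bool.false_ne_true (sp_inj h)

lemma col_enc_iff (n : ℕ) (x : Fin n → Bool) (i : Fin n) (b : Bool) :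
    col n x (enc n i b) = true ↔ b = x i := by
  simp only [col, decide_eq_true_eq]
  constructor
  · rintro (⟨j, h⟩ | h)
    · obtain ⟨rfl, rfl⟩ := enc_inj h
      rfl
    · exact absurd h (enc_ne_sp i b true)
  · rintro rfl; exact Or.inl ⟨i, rfl⟩

/-- Construction Puzzle 2 ⇒ Puzzle 3: from a partial function `f`
on `n` bits with a `*`-input `x`, one gets an intersecting hypergraph on
`2n + 2` vertices whose edges have size at most `C(f) + 1`, and a 2-colouring `c`,
such that every `c`-monochromatic hitting set has size at least
`min{C_{0̄}(f,x), C_{1̄}(f,x)}`. -/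
theorem puzzle2_to_puzzle3 (n : ℕ)
    (f : (Fin n → Bool) → Option Bool) (x : Fin n → Bool) (hx : f x = none) :
    ∃ E : Finset (Finset (Fin (2 * n + 2))), ∃ c : Fin (2 * n + 2) → Bool,
      (∀ e ∈ E, ∀ e' ∈ E, (e ∩ e').Nonempty) ∧
      (∀ e ∈ E, e.card ≤ Cmax f + 1) ∧
      ∀ U : Finset (Fin (2 * n + 2)),
        (∀ e ∈ E, (U ∩ e).Nonempty) →
        (∀ u ∈ U, ∀ v ∈ U, c u = c v) →
        min (Cx f {some true, none} x) (Cx f {some false, none} x) ≤ U.card := by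
  classical
  -- choose certificates for 1-inputs and 0-inputs
  have h1 : ∀ y : Fin n → Bool, ∃ ρ, f y = some true →
      IsCert f {some true} ρ y ∧ psize ρ ≤ Cmax f := by
    intro y
    by_cases hy : f y = some true
    · obtain ⟨ρ, hc, hs⟩ := exists_cert f {some true} y (by simp [hy])
      exact ⟨ρ, fun _ => ⟨hc, hs.trans (le_max_right _ _)⟩⟩
    · exact ⟨fun _ => none, fun h => absurd h hy⟩
  have h0 : ∀ y : Fin n → Bool, ∃ ρ, f y = some false →
      IsCert f {some false} ρ y ∧ psize ρ ≤ Cmax f := by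
    intro y
    by_cases hy : f y = some false
    · obtain ⟨ρ, hc, hs⟩ := exists_cert f {some false} y (by simp [hy])
      exact ⟨ρ, fun _ => ⟨hc, hs.trans (le_max_left _ _)⟩⟩
    · exact ⟨fun _ => none, fun h => absurd h hy⟩
  choose ρ1 hρ1 using h1
  choose ρ0 hρ0 using h0
  set e1 : (Fin n → Bool) → Finset (Fin (2 * n + 2)) := fun y =>
    (Finset.univ.filter fun i => (ρ1 y i).isSome).image (fun i => enc n i (y i))
      ∪ {sp n true} with he1
  set e0 : (Fin n → Bool) → Finset (Fin (2 * n + 2)) := fun y =>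
    (Finset.univ.filter fun i => (ρ0 y i).isSome).image (fun i => enc n i (!(y i)))
      ∪ {sp n false} with he0
  set E : Finset (Finset (Fin (2 * n + 2))) :=
    ((Finset.univ.filter fun y => f y = some true).image e1)
      ∪ ((Finset.univ.filter fun y => f y = some false).image e0) with hE
  have hEmem : ∀ e, e ∈ E ↔
      (∃ y, f y = some true ∧ e1 y = e) ∨ (∃ y, f y = some false ∧ e0 y = e) := by
    intro e
    simp [hE, Finset.mem_union, Finset.mem_image, Finset.mem_filter]
  -- the conflict lemma
  have key : ∀ y z, f y = some true → f z = some false →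
      ∃ i : Fin n, (ρ1 y i).isSome ∧ (ρ0 z i).isSome ∧ y i = !(z i) := by
    intro y z hy hz
    by_contra hcon
    push_neg at hcon
    set x' : Fin n → Bool := fun i =>
      match ρ1 y i with
      | some b => b
      | none => match ρ0 z i with
        | some b => b
        | none => false
      with hx'
    have hc1 : Consistent (ρ1 y) x' := by
      intro i b hb; simp [hx', hb]
    have hc0 : Consistent (ρ0 z) x' := by
      intro i b hb
      cases hob : ρ1 y i with
      | none => simp [hx', hob, hb]
      | some b' =>
        have h1s : (ρ1 y i).isSome := by simp [hob]
        have h0s : (ρ0 z i).isSome := by simp [hb]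
        have hne := hcon i h1s h0s
        have hyi : y i = b' := (hρ1 y hy).1.1 i b' hob
        have hzi : z i = b := (hρ0 z hz).1.1 i b hb
        have hbb : b' = b := by
          rw [hyi, hzi] at hne
          cases b' <;> cases b <;> simp_all
        simp [hx', hob, hbb]
    have ht := (hρ1 y hy).1.2 x' hc1
    have hf := (hρ0 z hz).1.2 x' hc0
    simp only [Set.mem_singleton_iff] at ht hf
    rw [ht] at hf
    exact absurd (Option.some.inj hf) (by decide)
  -- mixed edges intersect
  have hmix : ∀ y z, f y = some true → f z = some false → ((e1 y) ∩ (e0 z)).Nonempty := by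
    intro y z hy hz
    obtain ⟨i, h1s, h0s, hyz⟩ := key y z hy hz
    refine ⟨enc n i (y i), Finset.mem_inter.mpr ⟨?_, ?_⟩⟩
    · exact Finset.mem_union_left _ (Finset.mem_image.mpr
        ⟨i, Finset.mem_filter.mpr ⟨Finset.mem_univ _, h1s⟩, rfl⟩)
    · refine Finset.mem_union_left _ (Finset.mem_image.mpr
        ⟨i, Finset.mem_filter.mpr ⟨Finset.mem_univ _, h0s⟩, ?_⟩)
      rw [hyz]
  refine ⟨E, col n x, ?_, ?_, ?_⟩
  · -- intersecting
    intro e he e' he'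
    rw [hEmem] at he he'
    rcases he with ⟨y, hy, rfl⟩ | ⟨y, hy, rfl⟩ <;>
      rcases he' with ⟨z, hz, rfl⟩ | ⟨z, hz, rfl⟩
    · exact ⟨sp n true, Finset.mem_inter.mpr
        ⟨Finset.mem_union_right _ (Finset.mem_singleton_self _),
         Finset.mem_union_right _ (Finset.mem_singleton_self _)⟩⟩
    · exact hmix y z hy hz
    · obtain ⟨v, hv⟩ := hmix z y hz hy
      rw [Finset.mem_inter] at hv
      exact ⟨v, Finset.mem_inter.mpr ⟨hv.2, hv.1⟩⟩
    · exact ⟨sp n false, Finset.mem_inter.mpr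
        ⟨Finset.mem_union_right _ (Finset.mem_singleton_self _),
         Finset.mem_union_right _ (Finset.mem_singleton_self _)⟩⟩
  · -- edge sizes
    intro e he
    rw [hEmem] at he
    rcases he with ⟨y, hy, rfl⟩ | ⟨y, hy, rfl⟩
    · calc (e1 y).card
          ≤ ((Finset.univ.filter fun i => (ρ1 y i).isSome).image
              (fun i => enc n i (y i))).card + ({sp n true} : Finset _).card :=
            Finset.card_union_le _ _
        _ ≤ psize (ρ1 y) + 1 := by
            have := Finset.card_image_le (s := Finset.univ.filter fun i => (ρ1 y i).isSome)
              (f := fun i => enc n i (y i))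
            simp only [Finset.card_singleton]
            exact Nat.add_le_add_right this 1
        _ ≤ Cmax f + 1 := Nat.add_le_add_right (hρ1 y hy).2 1
    · calc (e0 y).card
          ≤ ((Finset.univ.filter fun i => (ρ0 y i).isSome).image
              (fun i => enc n i (!(y i)))).card + ({sp n false} : Finset _).card :=
            Finset.card_union_le _ _
        _ ≤ psize (ρ0 y) + 1 := by
            have := Finset.card_image_le (s := Finset.univ.filter fun i => (ρ0 y i).isSome)
              (f := fun i => enc n i (!(y i)))
            simp only [Finset.card_singleton]
            exact Nat.add_le_add_right this 1
        _ ≤ Cmax f + 1 := Nat.add_le_add_right (hρ0 y hy).2 1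
  · -- hitting sets
    intro U hhit hmono
    have hcol : (∀ u ∈ U, col n x u = true) ∨ (∀ u ∈ U, col n x u = false) := by
      rcases U.eq_empty_or_nonempty with rfl | ⟨u0, hu0⟩
      · left; intro u hu; exact absurd hu (Finset.notMem_empty u)
      · cases hc0 : col n x u0
        · right; intro u hu; rw [hmono u hu u0 hu0, hc0]
        · left; intro u hu; rw [hmono u hu u0 hu0, hc0]
    rcases hcol with hcol | hcol
    · -- all colour true : bound the left term
      refine le_trans (min_le_left _ _) ?_
      set ρ : Fin n → Option Bool :=
        fun i => if enc n i (x i) ∈ U then some (x i) else none with hρdef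
      have hcert : IsCert f {some true, none} ρ x := by
        constructor
        · intro i b hb
          by_cases h : enc n i (x i) ∈ U
          · rw [hρdef] at hb; simp only [if_pos h] at hb
            exact Option.some_injective _ hb
          · rw [hρdef] at hb; simp only [if_neg h] at hb
            exact absurd hb (by simp)
        · intro x' hx'
          rcases hfy : f x' with _ | b
          · exact Set.mem_insert_iff.mpr (Or.inr rfl)
          · cases b
            · exfalso
              have hedge : e0 x' ∈ E := (hEmem _).mpr (Or.inr ⟨x', hfy, rfl⟩)
              obtain ⟨v, hv⟩ := hhit _ hedge
              rw [Finset.mem_inter] at hv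
              obtain ⟨hvU, hve⟩ := hv
              rcases Finset.mem_union.mp hve with hv1 | hv2
              · obtain ⟨i, _, rfl⟩ := Finset.mem_image.mp hv1
                have hct := hcol _ hvU
                have hxi : (!(x' i)) = x i := (col_enc_iff n x i _).mp hct
                have hvU' : enc n i (x i) ∈ U := by rwa [hxi] at hvU
                have hxx : x' i = x i := hx' i (x i) (by rw [hρdef]; simp [hvU'])
                rw [hxx] at hxi
                exact (Bool.not_eq_self (x i)).mp hxi
              · rw [Finset.mem_singleton.mp hv2] at hvU
                have := hcol _ hvU
                rw [col_sp_false] at this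
                exact Bool.noConfusion this
            · exact Set.mem_insert_iff.mpr (Or.inl rfl)
      have hsize : psize ρ ≤ U.card := by
        have hfe : (Finset.univ.filter fun i => (ρ i).isSome) =
            (Finset.univ.filter fun i => enc n i (x i) ∈ U) := by
          apply Finset.filter_congr
          intro i _
          rw [hρdef]
          by_cases h : enc n i (x i) ∈ U <;> simp [h]
        rw [psize, hfe]
        apply Finset.card_le_card_of_injOn (fun i => enc n i (x i))
        · intro i hi
          exact (Finset.mem_filter.mp hi).2
        · intro i _ j _ h
          exact (enc_inj h).1
      exact le_trans (Nat.sInf_le ⟨ρ, hcert, le_rfl⟩) hsize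
    · -- all colour false : bound the right term
      refine le_trans (min_le_right _ _) ?_
      set ρ : Fin n → Option Bool :=
        fun i => if enc n i (!(x i)) ∈ U then some (x i) else none with hρdef
      have hcert : IsCert f {some false, none} ρ x := by
        constructor
        · intro i b hb
          by_cases h : enc n i (!(x i)) ∈ U
          · rw [hρdef] at hb; simp only [if_pos h] at hb
            exact Option.some_injective _ hb
          · rw [hρdef] at hb; simp only [if_neg h] at hb
            exact absurd hb (by simp)
        · intro x' hx'
          rcases hfy : f x' with _ | b
          · exact Set.mem_insert_iff.mpr (Or.inr rfl)
          · cases b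
            · exact Set.mem_insert_iff.mpr (Or.inl rfl)
            · exfalso
              have hedge : e1 x' ∈ E := (hEmem _).mpr (Or.inl ⟨x', hfy, rfl⟩)
              obtain ⟨v, hv⟩ := hhit _ hedge
              rw [Finset.mem_inter] at hv
              obtain ⟨hvU, hve⟩ := hv
              rcases Finset.mem_union.mp hve with hv1 | hv2
              · obtain ⟨i, _, rfl⟩ := Finset.mem_image.mp hv1
                have hcf := hcol _ hvU
                have hxi : x' i ≠ x i := by
                  intro hcontra
                  have : col n x (enc n i (x' i)) = true :=
                    (col_enc_iff n x i _).mpr hcontra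
                  rw [hcf] at this
                  exact Bool.noConfusion this
                have hxi' : x' i = !(x i) := by
                  cases hxz : x i <;> cases hxx : x' i <;> simp_all
                have hvU' : enc n i (!(x i)) ∈ U := by rwa [hxi'] at hvU
                have hxx : x' i = x i := hx' i (x i) (by rw [hρdef]; simp [hvU'])
                rw [hxx] at hxi'
                exact (Bool.eq_not_self (x i)).mp hxi'
              · rw [Finset.mem_singleton.mp hv2] at hvU
                have := hcol _ hvU
                rw [col_sp_true] at this
                exact Bool.noConfusion this
      have hsize : psize ρ ≤ U.card := by
        have hfe : (Finset.univ.filter fun i => (ρ i).isSome) =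
            (Finset.univ.filter fun i => enc n i (!(x i)) ∈ U) := by
          apply Finset.filter_congr
          intro i _
          rw [hρdef]
          by_cases h : enc n i (!(x i)) ∈ U <;> simp [h]
        rw [psize, hfe]
        apply Finset.card_le_card_of_injOn (fun i => enc n i (!(x i)))
        · intro i hi
          exact (Finset.mem_filter.mp hi).2
        · intro i _ j _ h
          exact (enc_inj h).1
      exact le_trans (Nat.sInf_le ⟨ρ, hcert, le_rfl⟩) hsize
end

section
/- Construction Puzzle 3 ⇒ Puzzle 2: let G = (V, E) be an intersecting hypergraph with all edges nonempty and rank r(G) (the maximum edge size), let c : V → {0,1} be a colouring, and let h > r(G) be such that every c-monochromatic hitting set of G has size at least h. Then there exists a monotone partial boolean function f : {0,1}^V → {0,1,*} and an input x with f(x) = * such that C(f) ≤ r(G) and min{C_{0̄}(f, x), C_{1̄}(f, x)} ≥ h. (Monotone means: changing any input bit from 0 to 1 can only change the value of f from 0 to * or 1, or from * to 1.) -/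
-- The hypergraph partial function: `1` if some edge is all-true, else `0` if some
-- edge is all-false, else `*`.
open Classical in
noncomputable def hgF {V : Type} (E : Finset (Finset V)) (x : V → Bool) : Option Bool :=
  if ∃ e ∈ E, ∀ v ∈ e, x v = true then some true
  else if ∃ e ∈ E, ∀ v ∈ e, x v = false then some false
  else none

lemma hgF_true_iff {V : Type} (E : Finset (Finset V)) (x : V → Bool) :
    hgF E x = some true ↔ ∃ e ∈ E, ∀ v ∈ e, x v = true := by
  unfold hgF; split_ifs <;> simp_all

lemma hgF_false_iff {V : Type} (E : Finset (Finset V)) (x : V → Bool) :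
    hgF E x = some false ↔
      (¬ ∃ e ∈ E, ∀ v ∈ e, x v = true) ∧ ∃ e ∈ E, ∀ v ∈ e, x v = false := by
  unfold hgF; split_ifs <;> simp_all

lemma hgF_none_iff {V : Type} (E : Finset (Finset V)) (x : V → Bool) :
    hgF E x = none ↔
      (¬ ∃ e ∈ E, ∀ v ∈ e, x v = true) ∧ ¬ ∃ e ∈ E, ∀ v ∈ e, x v = false := by
  unfold hgF; split_ifs <;> simp_all

lemma psize_indicator {V : Type} [Fintype V] [DecidableEq V] (e : Finset V) (b : Bool) :
    psize (fun v => if v ∈ e then some b else none) = e.card := by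
  unfold psize
  congr 1
  ext v
  by_cases hv : v ∈ e <;> simp [hv]

/-- Construction Puzzle 3 ⇒ Puzzle 2: from an intersecting
hypergraph `(V, E)` with nonempty edges of rank `r(G) = E.sup card < h`,
and a colouring `c` all of whose monochromatic hitting sets have size `≥ h`,
one gets a monotone partial function `f : {0,1}^V → {0,1,*}` and a `*`-input `x`
with `C(f) ≤ r(G)` and `min{C_{0̄}(f,x), C_{1̄}(f,x)} ≥ h`. -/
theorem puzzle3_to_puzzle2 (V : Type) [Fintype V] [DecidableEq V]
    (E : Finset (Finset V)) (c : V → Bool) (h : ℕ)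
    (hne : ∀ e ∈ E, e.Nonempty)
    (hint : ∀ e ∈ E, ∀ e' ∈ E, (e ∩ e').Nonempty)
    (hrank : E.sup Finset.card < h)
    (hhit : ∀ U : Finset V, (∀ e ∈ E, (U ∩ e).Nonempty) →
        (∀ u ∈ U, ∀ v ∈ U, c u = c v) → h ≤ U.card) :
    ∃ f : (V → Bool) → Option Bool,
      (∀ x y : V → Bool, (∀ v, x v = true → y v = true) →
        (f x = some false ∨ f y = some true ∨ f x = f y)) ∧
      ∃ x : V → Bool, f x = none ∧
        Cmax f ≤ E.sup Finset.card ∧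
        h ≤ min (Cx f {some true, none} x) (Cx f {some false, none} x) := by
  classical
  -- no edge is monochromatic under c
  have hmono : ∀ e ∈ E, ∀ b : Bool, ¬ (∀ v ∈ e, c v = b) := by
    intro e he b hb
    have h1 : h ≤ e.card := by
      refine hhit e (fun e' he' => hint e he e' he') (fun u hu v hv => ?_)
      rw [hb u hu, hb v hv]
    have h2 : e.card ≤ E.sup Finset.card := Finset.le_sup he
    omega
  refine ⟨hgF E, ?_, c, ?_, ?_, ?_⟩
  · -- monotonicity
    intro x y hxy
    have hyle : ∀ v, y v = false → x v = false := by
      intro v hv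
      cases hx : x v with
      | false => rfl
      | true => rw [hxy v hx] at hv; simp at hv
    cases hfx : hgF E x with
    | some b =>
      cases b with
      | false => exact Or.inl rfl
      | true =>
        obtain ⟨e, he, h1⟩ := (hgF_true_iff E x).mp hfx
        refine Or.inr (Or.inl ((hgF_true_iff E y).mpr ⟨e, he, fun v hv => hxy v (h1 v hv)⟩))
    | none =>
      obtain ⟨hx1, hx0⟩ := (hgF_none_iff E x).mp hfx
      cases hfy : hgF E y with
      | some b =>
        cases b with
        | true => exact Or.inr (Or.inl rfl)
        | false =>
          obtain ⟨_, e, he, h0⟩ := (hgF_false_iff E y).mp hfy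
          exact absurd ⟨e, he, fun v hv => hyle v (h0 v hv)⟩ hx0
      | none => exact Or.inr (Or.inr rfl)
  · -- f c = none
    rw [hgF_none_iff]
    constructor
    · rintro ⟨e, he, h1⟩; exact hmono e he true h1
    · rintro ⟨e, he, h0⟩; exact hmono e he false h0
  · -- Cmax ≤ rank
    refine max_le ?_ ?_
    · -- CC {some false}
      refine Nat.sInf_le ?_
      intro x hx
      simp only [Set.mem_singleton_iff] at hx
      obtain ⟨hx1, e, he, h0⟩ := (hgF_false_iff E x).mp hx
      refine ⟨fun v => if v ∈ e then some false else none, ⟨?_, ?_⟩, ?_⟩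
      · intro i b hb
        by_cases hi : i ∈ e
        · simp [hi] at hb; rw [hb]; exact h0 i hi
        · simp [hi] at hb
      · intro x' hcons
        simp only [Set.mem_singleton_iff]
        rw [hgF_false_iff]
        have h0' : ∀ v ∈ e, x' v = false := by
          intro v hv; exact hcons v false (by simp [hv])
        refine ⟨?_, e, he, h0'⟩
        rintro ⟨e', he', h1'⟩
        obtain ⟨v, hv⟩ := hint e he e' he'
        simp only [Finset.mem_inter] at hv
        have := h0' v hv.1
        have := h1' v hv.2
        simp_all
      · rw [psize_indicator]; exact Finset.le_sup he
    · -- CC {some true}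
      refine Nat.sInf_le ?_
      intro x hx
      simp only [Set.mem_singleton_iff] at hx
      obtain ⟨e, he, h1⟩ := (hgF_true_iff E x).mp hx
      refine ⟨fun v => if v ∈ e then some true else none, ⟨?_, ?_⟩, ?_⟩
      · intro i b hb
        by_cases hi : i ∈ e
        · simp [hi] at hb; rw [hb]; exact h1 i hi
        · simp [hi] at hb
      · intro x' hcons
        simp only [Set.mem_singleton_iff]
        rw [hgF_true_iff]
        exact ⟨e, he, fun v hv => hcons v true (by simp [hv])⟩
      · rw [psize_indicator]; exact Finset.le_sup he
  · -- lower bounds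
    have hfull : ∀ S : Set (Option Bool), none ∈ S →
        {k | ∃ ρ, IsCert (hgF E) S ρ c ∧ psize ρ ≤ k}.Nonempty := by
      intro S hS
      refine ⟨psize (fun v => some (c v)), fun v => some (c v), ⟨?_, ?_⟩, le_refl _⟩
      · intro i b hb; exact Option.some_injective _ hb
      · intro x' hcons
        have hx'c : x' = c := funext fun v => hcons v (c v) rfl
        rw [hx'c]
        have : hgF E c = none := by
          rw [hgF_none_iff]
          exact ⟨fun ⟨e, he, h1⟩ => hmono e he true h1,
                 fun ⟨e, he, h0⟩ => hmono e he false h0⟩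
        rw [this]; exact hS
    have key : ∀ b : Bool, ∀ k, (∃ ρ, IsCert (hgF E) {some b, none} ρ c ∧ psize ρ ≤ k) →
        h ≤ k := by
      intro b k ⟨ρ, ⟨hcons, hcert⟩, hk⟩
      set U := Finset.univ.filter (fun v => ρ v = some b) with hU
      have hcU : ∀ v ∈ U, c v = b := by
        intro v hv
        rw [hU, Finset.mem_filter] at hv
        exact hcons v b hv.2
      have hhitU : ∀ e ∈ E, (U ∩ e).Nonempty := by
        intro e he
        by_contra hcon
        -- bad input: b exactly where ρ = some b, ¬b elsewhere
        set x' : V → Bool := fun v => if ρ v = some b then b else !b with hx'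
        have hconsx' : Consistent ρ x' := by
          intro i b' hb'
          by_cases hib : ρ i = some b
          · have : b' = b := by rw [hib] at hb'; exact (Option.some_injective _ hb').symm
            simp [hx', hib, this]
          · have hb'b : b' ≠ b := fun hh => hib (by rw [hb', hh])
            have : x' i = !b := by simp [hx', hib]
            rw [this]
            cases b <;> cases b' <;> simp_all
        have hval := hcert x' hconsx'
        -- every v in e has x' v = !b
        have hxe : ∀ v ∈ e, x' v = !b := by
          intro v hv
          have hvU : v ∉ U := by
            intro hvU
            exact hcon ⟨v, Finset.mem_inter.mpr ⟨hvU, hv⟩⟩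
          have : ρ v ≠ some b := by
            intro hh; exact hvU (by rw [hU, Finset.mem_filter]; exact ⟨Finset.mem_univ v, hh⟩)
          simp [hx', this]
        -- no edge all-b under x'
        have hnob : ¬ ∃ e' ∈ E, ∀ v ∈ e', x' v = b := by
          rintro ⟨e', he', hb'⟩
          refine hmono e' he' b (fun v hv => ?_)
          have hxv := hb' v hv
          have hρv : ρ v = some b := by
            by_contra hh
            have hxv2 : x' v = !b := by simp [hx', hh]
            rw [hxv2] at hxv
            cases b <;> simp_all
          exact hcons v b hρv
        -- f x' = some (!b)
        have hfx' : hgF E x' = some (!b) := by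
          cases b with
          | true =>
            simp only [Bool.not_true] at hxe ⊢
            rw [hgF_false_iff]
            exact ⟨hnob, e, he, hxe⟩
          | false =>
            simp only [Bool.not_false] at hxe ⊢
            rw [hgF_true_iff]
            exact ⟨e, he, hxe⟩
        rw [hfx'] at hval
        cases b <;> simp at hval
      have hUcard : h ≤ U.card := by
        refine hhit U hhitU (fun u hu v hv => ?_)
        rw [hcU u hu, hcU v hv]
      have hUsub : U ⊆ Finset.univ.filter (fun v => (ρ v).isSome) := by
        intro v hv
        rw [hU, Finset.mem_filter] at hv
        rw [Finset.mem_filter]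
        exact ⟨Finset.mem_univ v, by rw [hv.2]; rfl⟩
      have : U.card ≤ psize ρ := Finset.card_le_card hUsub
      omega
    refine le_min ?_ ?_
    · exact le_csInf (hfull _ (by simp)) (fun k hk => key true k hk)
    · exact le_csInf (hfull _ (by simp)) (fun k hk => key false k hk)
end

section
/- For every total boolean function f : {0,1}^n → {0,1}, the degree of f is at most its unambiguous 1-certificate complexity: deg(f) ≤ UC₁(f). -/
/-- The degree of a total boolean function: the least total degree of a real
polynomial agreeing with `f` on the boolean cube (this equals the degree of the
unique multilinear representing polynomial). -/
noncomputable def bdeg {ι : Type} [Fintype ι] (f : (ι → Bool) → Bool) : ℕ :=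
  sInf {d | ∃ p : MvPolynomial ι ℝ, p.totalDegree ≤ d ∧
    ∀ x : ι → Bool,
      MvPolynomial.eval (fun i => if x i then (1 : ℝ) else 0) p
        = (if f x then (1 : ℝ) else 0)}

instance decConsistent {n : ℕ} (ρ : Fin n → Option Bool) (x : Fin n → Bool) :
    Decidable (Consistent ρ x) := by unfold Consistent; infer_instance

open MvPolynomial in
noncomputable def certPoly {n : ℕ} (ρ : Fin n → Option Bool) : MvPolynomial (Fin n) ℝ :=
  ∏ i : Fin n, match ρ i with
    | some true => X i
    | some false => 1 - X i
    | none => 1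

lemma certPoly_deg {n : ℕ} (ρ : Fin n → Option Bool) :
    (certPoly ρ).totalDegree ≤ psize ρ := by
  classical
  refine le_trans (MvPolynomial.totalDegree_finset_prod _ _) ?_
  have h : ∀ i : Fin n,
      (match ρ i with
        | some true => MvPolynomial.X (R := ℝ) i
        | some false => 1 - MvPolynomial.X i
        | none => 1).totalDegree ≤ if (ρ i).isSome then 1 else 0 := by
    intro i
    cases hρ : ρ i with
    | none => simp [MvPolynomial.totalDegree_one]
    | some b =>
      cases b
      · simp only [Option.isSome_some, if_true]
        calc (1 - MvPolynomial.X (R := ℝ) i).totalDegree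
            ≤ max (1 : MvPolynomial (Fin n) ℝ).totalDegree
              (-(MvPolynomial.X i)).totalDegree := by
              rw [sub_eq_add_neg]; exact MvPolynomial.totalDegree_add _ _
          _ ≤ 1 := by
              simp [MvPolynomial.totalDegree_one, MvPolynomial.totalDegree_neg,
                MvPolynomial.totalDegree_X]
      · simp [MvPolynomial.totalDegree_X]
  exact le_trans (Finset.sum_le_sum fun i _ => h i) (by simp [psize, Finset.sum_boole])

lemma certPoly_eval {n : ℕ} (ρ : Fin n → Option Bool) (x : Fin n → Bool) :
    MvPolynomial.eval (fun i => if x i then (1 : ℝ) else 0) (certPoly ρ)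
      = if Consistent ρ x then 1 else 0 := by
  classical
  rw [certPoly, map_prod]
  by_cases hc : Consistent ρ x
  · rw [if_pos hc]
    apply Finset.prod_eq_one
    intro i _
    cases hρ : ρ i with
    | none => simp
    | some b =>
      have := hc i b hρ
      cases b <;> simp_all
  · rw [if_neg hc]
    rw [Consistent] at hc
    push_neg at hc
    obtain ⟨i, b, hρ, hx⟩ := hc
    apply Finset.prod_eq_zero (Finset.mem_univ i)
    cases b <;> simp_all

lemma bdeg_le_of_mem {n : ℕ} (f : (Fin n → Bool) → Bool) (k : ℕ)
    (hk : k ∈ {k | ∃ U : Set (Fin n → Option Bool),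
      (∀ ρ ∈ U, psize ρ ≤ k ∧ ∀ x, Consistent ρ x → f x = true) ∧
      ∀ x, f x = true → ∃! ρ, ρ ∈ U ∧ Consistent ρ x}) :
    bdeg f ≤ k := by
  classical
  obtain ⟨U, hU1, hU2⟩ := hk
  have hfin : U.Finite := Set.toFinite U
  set Uf := hfin.toFinset with hUf
  apply Nat.sInf_le
  refine ⟨∑ ρ ∈ Uf, certPoly ρ, ?_, ?_⟩
  · refine le_trans (MvPolynomial.totalDegree_finset_sum _ _) ?_
    refine Finset.sup_le fun ρ hρ => ?_
    exact le_trans (certPoly_deg ρ) (hU1 ρ (hfin.mem_toFinset.mp hρ)).1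
  · intro x
    rw [map_sum]
    have : ∀ ρ ∈ Uf, MvPolynomial.eval (fun i => if x i then (1 : ℝ) else 0) (certPoly ρ)
        = if Consistent ρ x then 1 else 0 := fun ρ _ => certPoly_eval ρ x
    rw [Finset.sum_congr rfl this, Finset.sum_boole]
    by_cases hf : f x
    · rw [if_pos hf]
      obtain ⟨ρ₀, ⟨hρ₀U, hρ₀c⟩, huniq⟩ := hU2 x hf
      have : (Uf.filter fun ρ => Consistent ρ x) = {ρ₀} := by
        apply Finset.eq_singleton_iff_unique_mem.mpr
        constructor
        · exact Finset.mem_filter.mpr ⟨hfin.mem_toFinset.mpr hρ₀U, hρ₀c⟩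
        · intro ρ hρ
          obtain ⟨h1, h2⟩ := Finset.mem_filter.mp hρ
          exact huniq ρ ⟨hfin.mem_toFinset.mp h1, h2⟩
      rw [this]; simp
    · rw [if_neg hf]
      have : (Uf.filter fun ρ => Consistent ρ x) = ∅ := by
        apply Finset.filter_eq_empty_iff.mpr
        intro ρ hρ hc
        exact hf (((hU1 ρ (hfin.mem_toFinset.mp hρ)).2 x hc) ▸ rfl)
      rw [this]; simp

/-- For every total boolean function, `deg(f) ≤ UC₁(f)`. -/
theorem deg_le_uc1 (n : ℕ) (f : (Fin n → Bool) → Bool) : bdeg f ≤ UC1 f := by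
  classical
  have hne : n ∈ {k | ∃ U : Set (Fin n → Option Bool),
      (∀ ρ ∈ U, psize ρ ≤ k ∧ ∀ x, Consistent ρ x → f x = true) ∧
      ∀ x, f x = true → ∃! ρ, ρ ∈ U ∧ Consistent ρ x} := by
    refine ⟨{ρ | ∃ x, f x = true ∧ ρ = fun i => some (x i)}, ?_, ?_⟩
    · rintro ρ ⟨x, hfx, rfl⟩
      constructor
      · simp [psize]
      · intro y hy
        have : y = x := funext fun i => hy i (x i) rfl
        rwa [this]
    · intro x hfx
      refine ⟨fun i => some (x i), ⟨⟨x, hfx, rfl⟩, fun i b hb => Option.some_injective _ hb⟩, ?_⟩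
      rintro ρ ⟨⟨y, hfy, rfl⟩, hc⟩
      have : y = x := funext fun i => (hc i (y i) rfl).symm
      rw [this]
  have := Nat.sInf_mem ⟨n, hne⟩
  exact bdeg_le_of_mem f _ this
end

section
/- There exist constants c > 0 and K > 0 such that for all sufficiently large n there is an input y ∈ Hex_n⁻¹(*) with C_{0̄}(Hex_n, y) ≥ c·n² and C_{1̄}(Hex_n, y) ≤ K·n (witnessed by a single spiralling 1-path of length Θ(n²)). -/
/-- Two entries of an `n × n` matrix are connected if they are adjacent
horizontally or vertically (not diagonally). -/
def HexAdj (n : ℕ) (p q : Fin n × Fin n) : Prop :=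
  (p.1 = q.1 ∧ ((p.2 : ℕ) + 1 = (q.2 : ℕ) ∨ (q.2 : ℕ) + 1 = (p.2 : ℕ))) ∨
  (p.2 = q.2 ∧ ((p.1 : ℕ) + 1 = (q.1 : ℕ) ∨ (q.1 : ℕ) + 1 = (p.1 : ℕ)))

/-- A 1-path in `x`: a sequence of distinct, consecutively connected entries of
value `1`, starting in the topmost row and ending in the bottommost row. Its
length is the number of entries (`L.length`). -/
def IsOnePath (n : ℕ) (x : Fin n × Fin n → Bool) (L : List (Fin n × Fin n)) : Prop :=
  L ≠ [] ∧ L.Nodup ∧ L.Chain' (HexAdj n) ∧ (∀ p ∈ L, x p = true) ∧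
  (∃ p, L.head? = some p ∧ (p.1 : ℕ) = 0) ∧
  (∃ q, L.getLast? = some q ∧ (q.1 : ℕ) = n - 1)

/-- A 0-path in `x`: a sequence of distinct, consecutively connected entries of
value `0`, starting in the leftmost column and ending in the rightmost column. -/
def IsZeroPath (n : ℕ) (x : Fin n × Fin n → Bool) (L : List (Fin n × Fin n)) : Prop :=
  L ≠ [] ∧ L.Nodup ∧ L.Chain' (HexAdj n) ∧ (∀ p ∈ L, x p = false) ∧
  (∃ p, L.head? = some p ∧ (p.2 : ℕ) = 0) ∧
  (∃ q, L.getLast? = some q ∧ (q.2 : ℕ) = n - 1)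

open scoped Classical in
/-- The partial function `Hex_n : {0,1}^{n×n} → {0,1,*}`: value `1` if there is a
1-path of length at most `2n`, value `0` if there is a 0-path of length at most
`2n`, and `*` (i.e. `none`) otherwise. -/
noncomputable def Hex (n : ℕ) (x : Fin n × Fin n → Bool) : Option Bool :=
  if ∃ L, IsOnePath n x L ∧ L.length ≤ 2 * n then some true
  else if ∃ L, IsZeroPath n x L ∧ L.length ≤ 2 * n then some false
  else none


/-! ### Auxiliary development for the spiral (snake) input -/

namespace HexSpiralAux

/-- `L¹` distance between grid cells, in `omega`-friendly truncated-subtraction form. -/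
def cdist {n : ℕ} (p q : Fin n × Fin n) : ℕ :=
  (((p.1 : ℕ) - (q.1 : ℕ)) + ((q.1 : ℕ) - (p.1 : ℕ))) +
    (((p.2 : ℕ) - (q.2 : ℕ)) + ((q.2 : ℕ) - (p.2 : ℕ)))

lemma adj_cdist {n : ℕ} {p q : Fin n × Fin n} (h : HexAdj n p q) : cdist p q ≤ 1 := by
  rcases h with ⟨h1, h2⟩ | ⟨h1, h2⟩ <;>
    · have h1' := congrArg Fin.val h1
      unfold cdist
      rcases h2 with h2 | h2 <;> omega

lemma cdist_tri {n : ℕ} (p q r : Fin n × Fin n) : cdist p r ≤ cdist p q + cdist q r := by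
  unfold cdist; omega

lemma chain_cdist {n : ℕ} {L : List (Fin n × Fin n)} (hch : L.Chain' (HexAdj n)) :
    ∀ (j : ℕ) (hj : j < L.length) (i : ℕ) (hi : i < L.length), i ≤ j →
      cdist (L[i]'hi) (L[j]'hj) ≤ j - i := by
  intro j
  induction j with
  | zero =>
    intro hj i hi hij
    have : i = 0 := by omega
    subst this
    unfold cdist; omega
  | succ j ih =>
    intro hj i hi hij
    by_cases hej : i = j + 1
    · subst hej; unfold cdist; omega
    · have hij' : i ≤ j := by omega
      have hj' : j < L.length := by omega
      have hadj := List.isChain_iff_getElem.mp hch j (by omega)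
      have hd1 : cdist (L[j]'hj') (L[j+1]'hj) ≤ 1 := adj_cdist hadj
      have hd2 := ih hj' i hi hij'
      have hd3 := cdist_tri (L[i]'hi) (L[j]'hj') (L[j+1]'hj)
      omega

lemma ivt_aux (k : ℕ) : ∀ (m : ℕ) (f : ℕ → ℕ), (∀ i < m, f (i+1) ≤ f i + 1) →
    f 0 ≤ k → k ≤ f m → ∃ i, i ≤ m ∧ f i = k := by
  intro m
  induction m with
  | zero => intro f _ h0 hm; exact ⟨0, le_refl _, by omega⟩
  | succ m ih =>
    intro f hstep h0 hm
    by_cases hk : k ≤ f m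
    · obtain ⟨i, him, hi⟩ := ih f (fun i hi => hstep i (by omega)) h0 hk
      exact ⟨i, by omega, hi⟩
    · exact ⟨m+1, le_refl _, by have := hstep m (by omega); omega⟩

lemma row_exists {n : ℕ} {L : List (Fin n × Fin n)} (hch : L.Chain' (HexAdj n))
    (hne : L ≠ []) {p q : Fin n × Fin n} (hp : L.head? = some p) (hp0 : (p.1 : ℕ) = 0)
    (hq : L.getLast? = some q) (hq1 : (q.1 : ℕ) = n - 1) (k : ℕ) (hk : k ≤ n - 1) :
    ∃ (i : ℕ) (h : i < L.length), ((L[i]'h).1 : ℕ) = k := by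
  have hpos : 0 < L.length := List.length_pos_iff.mpr hne
  have h0 : ∀ h : (0:ℕ) < L.length, L[0]'h = p := by
    intro h
    rw [List.head?_eq_head hne] at hp
    have h2 := Option.some.inj hp
    rw [List.head_eq_getElem] at h2
    exact h2
  have hlast : ∀ h : L.length - 1 < L.length, L[L.length - 1]'h = q := by
    intro h
    rw [List.getLast?_eq_getLast hne] at hq
    have h2 := Option.some.inj hq
    rw [List.getLast_eq_getElem] at h2
    exact h2
  have harg1 : ∀ i < L.length - 1, ((L.getD (i+1) p).1 : ℕ) ≤ ((L.getD i p).1 : ℕ) + 1 := by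
    intro i hi
    have hi1 : i < L.length := by omega
    have hi2 : i + 1 < L.length := by omega
    rw [List.getD_eq_getElem L p hi1, List.getD_eq_getElem L p hi2]
    have hadj := List.isChain_iff_getElem.mp hch i (by omega)
    have hd : cdist (L[i]'hi1) (L[i+1]'hi2) ≤ 1 := adj_cdist hadj
    unfold cdist at hd; omega
  have harg2 : ((L.getD 0 p).1 : ℕ) ≤ k := by
    rw [List.getD_eq_getElem L p hpos, h0 hpos, hp0]; omega
  have harg3 : k ≤ ((L.getD (L.length - 1) p).1 : ℕ) := by
    rw [List.getD_eq_getElem L p (by omega : L.length - 1 < L.length),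
      hlast (by omega), hq1]
    exact hk
  obtain ⟨i, him, hi⟩ := ivt_aux k (L.length - 1)
    (fun i => ((L.getD i p).1 : ℕ)) harg1 harg2 harg3
  refine ⟨i, by omega, ?_⟩
  rw [← List.getD_eq_getElem L p (by omega : i < L.length)]
  exact hi

/-- The key geometric estimate: if values at rows `h, h+2, h+4` force columns
`e, n-1-e, e` on any `1`-path, then any `1`-path has length more than `2n`. -/
lemma noShortOnePath {n : ℕ} (h e : ℕ) (hn : 20 ≤ n) (hh : h + 6 ≤ n)
    (he : e = 0 ∨ e = n - 1) (x : Fin n × Fin n → Bool)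
    (hA : ∀ p : Fin n × Fin n, (p.1 : ℕ) = h → x p = true → (p.2 : ℕ) = e)
    (hB : ∀ p : Fin n × Fin n, (p.1 : ℕ) = h + 2 → x p = true → (p.2 : ℕ) = n - 1 - e)
    (hC : ∀ p : Fin n × Fin n, (p.1 : ℕ) = h + 4 → x p = true → (p.2 : ℕ) = e) :
    ¬ ∃ L, IsOnePath n x L ∧ L.length ≤ 2 * n := by
  rintro ⟨L, ⟨hne, -, hch, hval, ⟨p, hp, hp0⟩, ⟨q, hq, hq1⟩⟩, hlen⟩
  have hpos : 0 < L.length := List.length_pos_iff.mpr hne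
  have hlt : L.length - 1 < L.length := by omega
  have h0' : L[0]'hpos = p := by
    rw [List.head?_eq_head hne] at hp
    have h2 := Option.some.inj hp
    rw [List.head_eq_getElem] at h2
    exact h2
  have hlast' : L[L.length - 1]'hlt = q := by
    rw [List.getLast?_eq_getLast hne] at hq
    have h2 := Option.some.inj hq
    rw [List.getLast_eq_getElem] at h2
    exact h2
  have h0 : ((L[0]'hpos).1 : ℕ) = 0 := by rw [h0']; exact hp0
  have h1 : ((L[L.length - 1]'hlt).1 : ℕ) = n - 1 := by rw [hlast']; exact hq1
  obtain ⟨ia, hia, hra⟩ := row_exists hch hne hp hp0 hq hq1 h (by omega)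
  obtain ⟨ib, hib, hrb⟩ := row_exists hch hne hp hp0 hq hq1 (h+2) (by omega)
  obtain ⟨ic, hic, hrc⟩ := row_exists hch hne hp hp0 hq hq1 (h+4) (by omega)
  have hca : ((L[ia]'hia).2 : ℕ) = e := hA _ hra (hval _ (List.getElem_mem hia))
  have hcb : ((L[ib]'hib).2 : ℕ) = n - 1 - e := hB _ hrb (hval _ (List.getElem_mem hib))
  have hcc : ((L[ic]'hic).2 : ℕ) = e := hC _ hrc (hval _ (List.getElem_mem hic))
  have d0a := chain_cdist hch ia hia 0 hpos (by omega)
  have d0b := chain_cdist hch ib hib 0 hpos (by omega)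
  have d0c := chain_cdist hch ic hic 0 hpos (by omega)
  have dal := chain_cdist hch (L.length - 1) hlt ia hia (by omega)
  have dbl := chain_cdist hch (L.length - 1) hlt ib hib (by omega)
  have dcl := chain_cdist hch (L.length - 1) hlt ic hic (by omega)
  have ea1 : h ≤ ia := by unfold cdist at d0a; omega
  have eb1 : h + 2 ≤ ib := by unfold cdist at d0b; omega
  have ec1 : h + 4 ≤ ic := by unfold cdist at d0c; omega
  have ea2 : n - 1 - h ≤ L.length - 1 - ia := by unfold cdist at dal; omega
  have eb2 : n - 3 - h ≤ L.length - 1 - ib := by unfold cdist at dbl; omega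
  have ec2 : n - 5 - h ≤ L.length - 1 - ic := by unfold cdist at dcl; omega
  rcases le_total ia ib with hab | hab
  · rcases le_total ib ic with hbc | hbc
    · have dab := chain_cdist hch ib hib ia hia hab
      have dbc := chain_cdist hch ic hic ib hib hbc
      have eab : n + 1 ≤ ib - ia := by unfold cdist at dab; rcases he with he | he <;> omega
      have ebc : n + 1 ≤ ic - ib := by unfold cdist at dbc; rcases he with he | he <;> omega
      omega
    · have dab := chain_cdist hch ib hib ia hia hab
      have dcb := chain_cdist hch ib hib ic hic hbc
      have eab : n + 1 ≤ ib - ia := by unfold cdist at dab; rcases he with he | he <;> omega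
      have ecb : n + 1 ≤ ib - ic := by unfold cdist at dcb; rcases he with he | he <;> omega
      omega
  · have dba := chain_cdist hch ia hia ib hib hab
    have eba : n + 1 ≤ ia - ib := by unfold cdist at dba; rcases he with he | he <;> omega
    omega

/-- The cells of the explicit short `0`-path used in the adversary argument. -/
def gpath (n r j : ℕ) (hr2 : r + 2 < n) : ℕ → Fin n × Fin n := fun t =>
  (⟨r + min (t - j) 2, by omega⟩, ⟨min (t - min (t - j) 2) (n - 1), by omega⟩)

lemma gpath_fst (n r j : ℕ) (hr2 : r + 2 < n) (t : ℕ) :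
    ((gpath n r j hr2 t).1 : ℕ) = r + min (t - j) 2 := rfl

lemma gpath_snd (n r j : ℕ) (hr2 : r + 2 < n) (t : ℕ) :
    ((gpath n r j hr2 t).2 : ℕ) = min (t - min (t - j) 2) (n - 1) := rfl

lemma exists_zeroPath {n : ℕ} (r j : ℕ) (hn : 20 ≤ n) (hr2 : r + 2 < n)
    (hj1 : 1 ≤ j) (hj : j + 2 ≤ n - 1) (x : Fin n × Fin n → Bool)
    (hx : ∀ p : Fin n × Fin n,
      (((p.1 : ℕ) = r ∧ (p.2 : ℕ) ≤ j) ∨ ((p.1 : ℕ) = r + 1 ∧ (p.2 : ℕ) = j) ∨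
       ((p.1 : ℕ) = r + 2 ∧ j ≤ (p.2 : ℕ))) → x p = false) :
    ∃ L, IsZeroPath n x L ∧ L.length ≤ 2 * n := by
  set g : ℕ → Fin n × Fin n := gpath n r j hr2 with hgdef
  set L : List (Fin n × Fin n) := (List.range (n+2)).map g with hLdef
  have hlen : L.length = n + 2 := by simp [hLdef]
  have hne : L ≠ [] := by
    apply List.ne_nil_of_length_pos; omega
  have hget : ∀ (t : ℕ) (ht : t < L.length), L[t]'ht = g t := by
    intro t ht
    simp [hLdef]
  refine ⟨L, ⟨hne, ?_, ?_, ?_, ?_, ?_⟩, by omega⟩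
  · -- Nodup
    apply List.Nodup.map_on ?_ List.nodup_range
    intro t ht t' ht' heq
    simp only [List.mem_range] at ht ht'
    have e1 : ((g t).1 : ℕ) = ((g t').1 : ℕ) := by rw [heq]
    have e2 : ((g t).2 : ℕ) = ((g t').2 : ℕ) := by rw [heq]
    rw [hgdef] at e1 e2
    rw [gpath_fst, gpath_fst] at e1
    rw [gpath_snd, gpath_snd] at e2
    omega
  · -- Chain'
    apply List.isChain_iff_getElem.mpr
    intro i hi
    rw [hlen] at hi
    have hi1 : i < L.length := by omega
    have hi2 : i + 1 < L.length := by omega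
    rw [hget i hi1, hget (i+1) hi2]
    rcases (show i < j ∨ i = j ∨ i = j + 1 ∨ j + 2 ≤ i by omega) with hc | hc | hc | hc
    · left
      refine ⟨Fin.ext ?_, Or.inl ?_⟩
      · show ((g i).1 : ℕ) = ((g (i+1)).1 : ℕ)
        rw [hgdef, gpath_fst, gpath_fst]; omega
      · show ((g i).2 : ℕ) + 1 = ((g (i+1)).2 : ℕ)
        rw [hgdef, gpath_snd, gpath_snd]; omega
    · right
      refine ⟨Fin.ext ?_, Or.inl ?_⟩
      · show ((g i).2 : ℕ) = ((g (i+1)).2 : ℕ)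
        rw [hgdef, gpath_snd, gpath_snd]; omega
      · show ((g i).1 : ℕ) + 1 = ((g (i+1)).1 : ℕ)
        rw [hgdef, gpath_fst, gpath_fst]; omega
    · right
      refine ⟨Fin.ext ?_, Or.inl ?_⟩
      · show ((g i).2 : ℕ) = ((g (i+1)).2 : ℕ)
        rw [hgdef, gpath_snd, gpath_snd]; omega
      · show ((g i).1 : ℕ) + 1 = ((g (i+1)).1 : ℕ)
        rw [hgdef, gpath_fst, gpath_fst]; omega
    · left
      refine ⟨Fin.ext ?_, Or.inl ?_⟩
      · show ((g i).1 : ℕ) = ((g (i+1)).1 : ℕ)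
        rw [hgdef, gpath_fst, gpath_fst]; omega
      · show ((g i).2 : ℕ) + 1 = ((g (i+1)).2 : ℕ)
        rw [hgdef, gpath_snd, gpath_snd]; omega
  · -- all values 0
    intro p hp
    simp only [hLdef, List.mem_map, List.mem_range] at hp
    obtain ⟨t, ht, rfl⟩ := hp
    apply hx
    rcases (show t ≤ j ∨ t = j + 1 ∨ j + 2 ≤ t by omega) with hc | hc | hc
    · left
      constructor
      · rw [hgdef, gpath_fst]; omega
      · rw [hgdef, gpath_snd]; omega
    · right; left
      constructor
      · rw [hgdef, gpath_fst]; omega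
      · rw [hgdef, gpath_snd]; omega
    · right; right
      constructor
      · rw [hgdef, gpath_fst]; omega
      · rw [hgdef, gpath_snd]; omega
  · -- head
    refine ⟨g 0, ?_, ?_⟩
    · rw [List.head?_eq_head hne, List.head_eq_getElem]
      rw [hget 0 (by omega)]
    · rw [hgdef, gpath_snd]; omega
  · -- last
    refine ⟨g (n+1), ?_, ?_⟩
    · rw [List.getLast?_eq_getLast hne, List.getLast_eq_getElem]
      rw [hget (L.length - 1) (by omega)]
      have hfix : L.length - 1 = n + 1 := by omega
      rw [hfix]
    · rw [hgdef, gpath_snd]; omega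

/-- The snake input: odd rows are all `1`, even rows have a single `1`, at the
left end for rows `≡ 0 (mod 4)` and at the right end for rows `≡ 2 (mod 4)`. -/
def yspiral (n : ℕ) (p : Fin n × Fin n) : Bool :=
  decide ((p.1 : ℕ) % 2 = 1 ∨ ((p.1 : ℕ) % 4 = 0 ∧ (p.2 : ℕ) = 0) ∨
    ((p.1 : ℕ) % 4 = 2 ∧ (p.2 : ℕ) = n - 1))

lemma yspiral_true_iff {n : ℕ} {p : Fin n × Fin n} :
    yspiral n p = true ↔ ((p.1 : ℕ) % 2 = 1 ∨ ((p.1 : ℕ) % 4 = 0 ∧ (p.2 : ℕ) = 0) ∨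
      ((p.1 : ℕ) % 4 = 2 ∧ (p.2 : ℕ) = n - 1)) := by
  simp [yspiral]

lemma yspiral_false_iff {n : ℕ} {p : Fin n × Fin n} :
    yspiral n p = false ↔ ¬ ((p.1 : ℕ) % 2 = 1 ∨ ((p.1 : ℕ) % 4 = 0 ∧ (p.2 : ℕ) = 0) ∨
      ((p.1 : ℕ) % 4 = 2 ∧ (p.2 : ℕ) = n - 1)) := by
  simp [yspiral]

lemma yspiral_noOnePath {n : ℕ} (hn : 100 ≤ n) (x : Fin n × Fin n → Bool)
    (hle : ∀ p, x p = true → yspiral n p = true) :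
    ¬ ∃ L, IsOnePath n x L ∧ L.length ≤ 2 * n := by
  apply noShortOnePath 2 (n-1) (by omega) (by omega) (Or.inr rfl) x
  · intro p hr hv
    have := yspiral_true_iff.mp (hle p hv)
    omega
  · intro p hr hv
    have := yspiral_true_iff.mp (hle p hv)
    omega
  · intro p hr hv
    have := yspiral_true_iff.mp (hle p hv)
    omega

lemma yspiral_noZeroPath {n : ℕ} (hn : 100 ≤ n) :
    ¬ ∃ L, IsZeroPath n (yspiral n) L ∧ L.length ≤ 2 * n := by
  rintro ⟨L, ⟨hne, -, hch, hval, ⟨p, hp, hp0⟩, ⟨q, hq, hq1⟩⟩, -⟩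
  have hpos : 0 < L.length := List.length_pos_iff.mpr hne
  have hlt : L.length - 1 < L.length := by omega
  have h0' : L[0]'hpos = p := by
    rw [List.head?_eq_head hne] at hp
    have h2 := Option.some.inj hp
    rw [List.head_eq_getElem] at h2
    exact h2
  have hlast' : L[L.length - 1]'hlt = q := by
    rw [List.getLast?_eq_getLast hne] at hq
    have h2 := Option.some.inj hq
    rw [List.getLast_eq_getElem] at h2
    exact h2
  have hrow : ∀ (i : ℕ) (hi : i < L.length), ((L[i]'hi).1 : ℕ) = ((L[0]'hpos).1 : ℕ) := by
    intro i
    induction i with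
    | zero => intro hi; rfl
    | succ i ih =>
      intro hi
      have hi' : i < L.length := by omega
      have hadj := List.isChain_iff_getElem.mp hch i (by omega)
      have hv1 := yspiral_false_iff.mp (hval _ (List.getElem_mem hi'))
      have hv2 := yspiral_false_iff.mp (hval _ (List.getElem_mem hi))
      push_neg at hv1 hv2
      have hprev := ih hi'
      rcases hadj with ⟨h1, h2⟩ | ⟨h1, h2⟩
      · have h1' := congrArg Fin.val h1
        omega
      · omega
  have hyp : yspiral n p = false := by
    rw [← h0']; exact hval _ (List.getElem_mem hpos)
  have hyq : yspiral n q = false := by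
    rw [← hlast']; exact hval _ (List.getElem_mem hlt)
  have hrq : ((L[L.length - 1]'hlt).1 : ℕ) = ((L[0]'hpos).1 : ℕ) := hrow _ hlt
  rw [h0', hlast'] at hrq
  rw [yspiral_false_iff] at hyp hyq
  push_neg at hyp hyq
  omega

lemma yspiral_hex_none {n : ℕ} (hn : 100 ≤ n) : Hex n (yspiral n) = none := by
  unfold Hex
  rw [if_neg (yspiral_noOnePath hn (yspiral n) (fun p h => h)),
    if_neg (yspiral_noZeroPath hn)]

lemma yspiral_upper {n : ℕ} (hn : 100 ≤ n) :
    Cx (Hex n) {some false, none} (yspiral n) ≤ 3 * n := by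
  have hn0 : 0 < n := by omega
  set ρ : Fin n × Fin n → Option Bool := fun p =>
    if ((p.1 : ℕ) = 4 ∧ (p.2 : ℕ) ≠ 0) ∨ ((p.1 : ℕ) = 6 ∧ (p.2 : ℕ) ≠ n - 1) ∨
       ((p.1 : ℕ) = 8 ∧ (p.2 : ℕ) ≠ 0) then some false else none with hρdef
  apply Nat.sInf_le
  refine ⟨ρ, ⟨?_, ?_⟩, ?_⟩
  · -- consistent with yspiral
    intro i b hib
    rw [hρdef] at hib
    simp only at hib
    split at hib
    · rename_i hcond
      cases hib
      rw [yspiral_false_iff]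
      push_neg
      omega
    · cases hib
  · -- certificate property
    intro x' hx'
    have h1 : ¬ ∃ L, IsOnePath n x' L ∧ L.length ≤ 2 * n := by
      apply noShortOnePath 4 0 (by omega) (by omega) (Or.inl rfl) x'
      · intro p hr hv
        by_contra hcol
        have hsome : ρ p = some false := by
          rw [hρdef]; simp only; rw [if_pos (Or.inl ⟨hr, hcol⟩)]
        have := hx' p false hsome
        rw [hv] at this; cases this
      · intro p hr hv
        by_contra hcol
        have hcol' : (p.2 : ℕ) ≠ n - 1 := by omega
        have hsome : ρ p = some false := by
          rw [hρdef]; simp only; rw [if_pos (Or.inr (Or.inl ⟨hr, hcol'⟩))]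
        have := hx' p false hsome
        rw [hv] at this; cases this
      · intro p hr hv
        by_contra hcol
        have hsome : ρ p = some false := by
          rw [hρdef]; simp only; rw [if_pos (Or.inr (Or.inr ⟨hr, hcol⟩))]
        have := hx' p false hsome
        rw [hv] at this; cases this
    unfold Hex
    rw [if_neg h1]
    by_cases h2 : ∃ L, IsZeroPath n x' L ∧ L.length ≤ 2 * n
    · rw [if_pos h2]; left; rfl
    · rw [if_neg h2]; right; rfl
  · -- size bound
    unfold psize
    have hsub : (Finset.univ.filter fun i => (ρ i).isSome) ⊆
        ({(⟨4, by omega⟩ : Fin n), ⟨6, by omega⟩, ⟨8, by omega⟩} : Finset (Fin n)) ×ˢ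
          Finset.univ := by
      intro p hp
      simp only [Finset.mem_filter] at hp
      have h2 := hp.2
      rw [hρdef] at h2
      simp only at h2
      split at h2
      · rename_i hcond
        rw [Finset.mem_product]
        refine ⟨?_, Finset.mem_univ _⟩
        simp only [Finset.mem_insert, Finset.mem_singleton]
        rcases hcond with ⟨h, -⟩ | ⟨h, -⟩ | ⟨h, -⟩
        · left; exact Fin.ext h
        · right; left; exact Fin.ext h
        · right; right; exact Fin.ext h
      · simp at h2
    calc (Finset.univ.filter fun i => (ρ i).isSome).card
        ≤ _ := Finset.card_le_card hsub
      _ ≤ 3 * n := by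
          rw [Finset.card_product]
          have h3 : ({(⟨4, by omega⟩ : Fin n), ⟨6, by omega⟩, ⟨8, by omega⟩} :
              Finset (Fin n)).card ≤ 3 := by
            apply le_trans (Finset.card_insert_le _ _)
            apply Nat.succ_le_succ
            apply le_trans (Finset.card_insert_le _ _)
            simp
          have h4 : (Finset.univ : Finset (Fin n)).card = n := by simp
          rw [h4]
          exact Nat.mul_le_mul_right n h3

lemma yspiral_lower {n : ℕ} (hn : 100 ≤ n) :
    n / 8 * (n - 3) ≤ Cx (Hex n) {some true, none} (yspiral n) := by
  have hn0 : 0 < n := by omega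
  set S : Set ℕ :=
    {k | ∃ ρ, IsCert (Hex n) {some true, none} ρ (yspiral n) ∧ psize ρ ≤ k} with hSdef
  have hSne : S.Nonempty := by
    refine ⟨psize (fun p => some (yspiral n p)), fun p => some (yspiral n p), ⟨?_, ?_⟩, le_refl _⟩
    · intro i b hib
      exact Option.some.inj hib
    · intro x' hx'
      have hxy : x' = yspiral n := funext fun p => hx' p (yspiral n p) rfl
      rw [hxy, yspiral_hex_none hn]
      right; rfl
  have hmem : Cx (Hex n) {some true, none} (yspiral n) ∈ S := Nat.sInf_mem hSne
  obtain ⟨ρ, ⟨hcons, hcert⟩, hsize⟩ := hmem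
  refine le_trans ?_ hsize
  -- count forced revealed cells
  unfold psize
  have hcard : ((Finset.range (n/8)) ×ˢ (Finset.range (n-3))).card = n / 8 * (n - 3) := by
    simp
  rw [← hcard]
  apply Finset.card_le_card_of_injOn
    (fun ab => ((⟨(4*ab.1+3) % n, Nat.mod_lt _ hn0⟩ : Fin n),
                (⟨(ab.2+1) % n, Nat.mod_lt _ hn0⟩ : Fin n)))
  · -- maps into revealed cells
    rintro ⟨a, b⟩ hab
    simp only [Finset.coe_product, Set.mem_prod, Finset.mem_coe, Finset.mem_product, Finset.mem_range] at hab
    obtain ⟨ha, hb⟩ := hab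
    have hba : 4*a+3 < n := by omega
    have hbb : b+1 < n := by omega
    set u : Fin n × Fin n :=
      ((⟨(4*a+3) % n, Nat.mod_lt _ hn0⟩ : Fin n), (⟨(b+1) % n, Nat.mod_lt _ hn0⟩ : Fin n))
      with hudef
    have hu1 : (u.1 : ℕ) = 4*a+3 := by
      rw [hudef]; exact Nat.mod_eq_of_lt hba
    have hu2 : (u.2 : ℕ) = b+1 := by
      rw [hudef]; exact Nat.mod_eq_of_lt hbb
    simp only [Finset.mem_coe, Finset.mem_filter]
    refine ⟨Finset.mem_univ _, ?_⟩
    by_contra hns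
    have hnone : ρ u = none := Option.not_isSome_iff_eq_none.mp hns
    set x' : Fin n × Fin n → Bool := fun p => if p = u then false else yspiral n p
      with hx'def
    have hxc : Consistent ρ x' := by
      intro i bb hi
      by_cases hiu : i = u
      · rw [hiu, hnone] at hi; cases hi
      · rw [hx'def]; simp only [if_neg hiu]
        exact hcons i bb hi
    have hmem2 := hcert x' hxc
    have hfalse : Hex n x' = some false := by
      have h1 : ¬ ∃ L, IsOnePath n x' L ∧ L.length ≤ 2 * n := by
        apply yspiral_noOnePath hn
        intro p hv
        rw [hx'def] at hv
        simp only at hv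
        by_cases hpu : p = u
        · rw [if_pos hpu] at hv; cases hv
        · rw [if_neg hpu] at hv; exact hv
      have h2 : ∃ L, IsZeroPath n x' L ∧ L.length ≤ 2 * n := by
        apply exists_zeroPath (4*a+2) (b+1) (by omega) (by omega) (by omega) (by omega)
        intro p hcase
        have hxval : ∀ (hpu : p ≠ u), x' p = yspiral n p := by
          intro hpu; rw [hx'def]; simp only [if_neg hpu]
        rcases hcase with ⟨hr, hc⟩ | ⟨hr, hc⟩ | ⟨hr, hc⟩
        · have hpu : p ≠ u := by
            intro hh; rw [hh] at hr; omega
          rw [hxval hpu, yspiral_false_iff]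
          push_neg
          omega
        · have hpu : p = u := by
            have e1 : (p.1 : ℕ) = (u.1 : ℕ) := by omega
            have e2 : (p.2 : ℕ) = (u.2 : ℕ) := by omega
            exact Prod.ext (Fin.ext e1) (Fin.ext e2)
          rw [hx'def]; simp only [if_pos hpu]
        · have hpu : p ≠ u := by
            intro hh; rw [hh] at hr; omega
          rw [hxval hpu, yspiral_false_iff]
          push_neg
          omega
      unfold Hex
      rw [if_neg h1, if_pos h2]
    rw [hfalse] at hmem2
    simp at hmem2
  · -- injectivity
    rintro ⟨a, b⟩ hab ⟨a', b'⟩ hab' heq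
    simp only [Finset.coe_product, Set.mem_prod, Finset.mem_coe, Finset.mem_range] at hab hab'
    have e1 : (4*a+3) % n = (4*a'+3) % n := by
      have := congrArg (fun z => ((z.1 : Fin n) : ℕ)) heq
      simpa using this
    have e2 : (b+1) % n = (b'+1) % n := by
      have := congrArg (fun z => ((z.2 : Fin n) : ℕ)) heq
      simpa using this
    rw [Nat.mod_eq_of_lt (by omega), Nat.mod_eq_of_lt (by omega)] at e1
    rw [Nat.mod_eq_of_lt (by omega), Nat.mod_eq_of_lt (by omega)] at e2
    exact Prod.ext (by omega) (by omega)

end HexSpiralAux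

/-- For some constants `c, K > 0` and all sufficiently large `n`
there is a `*`-input `y` of `Hex_n` (a single long 1-spiral) with
`C_{0̄}(Hex_n, y) ≥ c·n²` while `C_{1̄}(Hex_n, y) ≤ K·n`. -/
theorem hex_spiral_input :
    ∃ c K : ℝ, 0 < c ∧ 0 < K ∧ ∃ N : ℕ, ∀ n ≥ N,
      ∃ y : Fin n × Fin n → Bool,
        Hex n y = none ∧
        c * (n : ℝ) ^ 2 ≤ (Cx (Hex n) {some true, none} y : ℝ) ∧
        (Cx (Hex n) {some false, none} y : ℝ) ≤ K * (n : ℝ) := by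
  refine ⟨1/32, 3, by norm_num, by norm_num, 100, ?_⟩
  intro n hn
  have hn0 : 0 < n := by omega
  refine ⟨HexSpiralAux.yspiral n, HexSpiralAux.yspiral_hex_none hn, ?_, ?_⟩
  · have hl := HexSpiralAux.yspiral_lower (n := n) hn
    have hcast : ((n / 8 * (n - 3) : ℕ) : ℝ) ≤
        (Cx (Hex n) {some true, none} (HexSpiralAux.yspiral n) : ℝ) := Nat.cast_le.mpr hl
    have hc1 : ((n / 8 * (n - 3) : ℕ) : ℝ) = ((n / 8 : ℕ) : ℝ) * ((n : ℝ) - 3) := by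
      push_cast [Nat.cast_sub (show 3 ≤ n by omega)]
      ring
    rw [hc1] at hcast
    have hQ : (n : ℝ) ≤ 8 * ((n / 8 : ℕ) : ℝ) + 7 := by
      have h8 : n ≤ 8 * (n / 8) + 7 := by omega
      exact_mod_cast h8
    have hQ0 : (0 : ℝ) ≤ ((n / 8 : ℕ) : ℝ) := Nat.cast_nonneg _
    have hn' : (100 : ℝ) ≤ (n : ℝ) := by exact_mod_cast hn
    nlinarith [hcast, hQ, hQ0, hn',
      mul_le_mul_of_nonneg_right (show (n : ℝ) - 7 ≤ 8 * ((n / 8 : ℕ) : ℝ) by linarith)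
        (show (0:ℝ) ≤ (n : ℝ) - 3 by linarith),
      mul_le_mul_of_nonneg_right hn' (show (0:ℝ) ≤ (n : ℝ) by linarith)]
  · have hu := HexSpiralAux.yspiral_upper (n := n) hn
    have : ((Cx (Hex n) {some false, none} (HexSpiralAux.yspiral n) : ℕ) : ℝ) ≤ ((3 * n : ℕ) : ℝ) :=
      Nat.cast_le.mpr hu
    push_cast at this
    linarith
end
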